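/- arXiv:math/0008193 — 7 statements merged into one kernel-verified Lean document; each statement's English description precedes it below -/
import Mathlib

section
/- Let D ⊆ ℂⁿ be a connected Reinhardt domain and let f = (f_1, …, f_n) : D → D be a biholomorphic automorphism of D that commutes with every torus rotation, i.e. f_j(e^{iθ_1}z_1, …, e^{iθ_n}z_n) = e^{iθ_j} f_j(z_1, …, z_n) for all real θ_1, …, θ_n, all z ∈ D, and all j = 1, …, n. Then there exist nonzero complex numbers λ_1, …, λ_n such that f(z) = (λ_1 z_1, …, λ_n z_n) for all z ∈ D. -/
open Complex Metric Set

/-- If `u * φ'(u) = 0` on an open set, then `φ' = 0` there (using 1-D analyticity). -/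
lemma deriv_eq_zero_of_mul_deriv_eq_zero {U : Set ℂ} (hU : IsOpen U) {φ : ℂ → ℂ}
    (hφ : DifferentiableOn ℂ φ U) (h : ∀ u ∈ U, u * deriv φ u = 0) :
    ∀ u ∈ U, deriv φ u = 0 := by
  have hA : AnalyticOnNhd ℂ φ U := hφ.analyticOnNhd hU
  intro u hu
  rcases eq_or_ne u 0 with rfl | hne
  · have hcont : ContinuousAt (deriv φ) 0 :=
      ((hA.deriv 0 hu).differentiableAt).continuousAt
    have hev : ∀ᶠ v in nhdsWithin (0:ℂ) {(0:ℂ)}ᶜ, deriv φ v = 0 := by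
      have hUnhds : U ∈ nhds (0:ℂ) := hU.mem_nhds hu
      filter_upwards [nhdsWithin_le_nhds hUnhds, self_mem_nhdsWithin] with v hvU hv0
      exact (mul_eq_zero.mp (h v hvU)).resolve_left hv0
    have h1 : Filter.Tendsto (deriv φ) (nhdsWithin (0:ℂ) {(0:ℂ)}ᶜ) (nhds (deriv φ 0)) :=
      hcont.tendsto.mono_left nhdsWithin_le_nhds
    have h2 : Filter.Tendsto (deriv φ) (nhdsWithin (0:ℂ) {(0:ℂ)}ᶜ) (nhds 0) :=
      tendsto_const_nhds.congr' (Filter.EventuallyEq.symm hev)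
    exact tendsto_nhds_unique h1 h2
  · exact (mul_eq_zero.mp (h u hu)).resolve_left hne

/-- A function with vanishing derivative on a ball is constant there. -/
lemma const_of_deriv_zero_ball {p : ℂ} {r : ℝ} {φ : ℂ → ℂ}
    (hφ : DifferentiableOn ℂ φ (ball p r))
    (h0 : ∀ u ∈ ball p r, deriv φ u = 0) :
    ∀ u ∈ ball p r, ∀ v ∈ ball p r, φ u = φ v := by
  intro u hu v hv
  apply (convex_ball p r).is_const_of_fderivWithin_eq_zero hφ _ hu hv
  intro x hx
  rw [fderivWithin_of_isOpen isOpen_ball hx]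
  apply ContinuousLinearMap.ext_ring
  show (fderiv ℂ φ x) 1 = (0 : ℂ →L[ℂ] ℂ) 1
  rw [fderiv_apply_one_eq_deriv, h0 x hx]; simp

/-- 1-D Euler equation `u φ'(u) = φ(u)` on a ball forces `φ(u) = c u`. -/
lemma linear_of_euler_ball {p : ℂ} {r : ℝ} (hr : 0 < r) {φ : ℂ → ℂ}
    (hφ : DifferentiableOn ℂ φ (ball p r))
    (h : ∀ u ∈ ball p r, u * deriv φ u = φ u) :
    ∃ c : ℂ, ∀ u ∈ ball p r, φ u = c * u := by
  have hA : AnalyticOnNhd ℂ φ (ball p r) := hφ.analyticOnNhd isOpen_ball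
  have hA' : AnalyticOnNhd ℂ (deriv φ) (ball p r) := hA.deriv
  have hd' : DifferentiableOn ℂ (deriv φ) (ball p r) := fun x hx =>
    (hA' x hx).differentiableAt.differentiableWithinAt
  have key : ∀ u ∈ ball p r, u * deriv (deriv φ) u = 0 := by
    intro u hu
    have h1 : HasDerivAt (fun v => v * deriv φ v)
        (1 * deriv φ u + u * deriv (deriv φ) u) u :=
      (hasDerivAt_id u).mul (hA' u hu).differentiableAt.hasDerivAt
    have heq : (fun v => v * deriv φ v) =ᶠ[nhds u] φ := by
      filter_upwards [isOpen_ball.mem_nhds hu] with v hv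
      exact h v hv
    have h2 : HasDerivAt φ (1 * deriv φ u + u * deriv (deriv φ) u) u :=
      h1.congr_of_eventuallyEq (Filter.EventuallyEq.symm heq)
    have h3 := h2.deriv
    rw [one_mul] at h3
    linear_combination -h3
  have hz : ∀ u ∈ ball p r, deriv (deriv φ) u = 0 :=
    deriv_eq_zero_of_mul_deriv_eq_zero isOpen_ball hd' key
  refine ⟨deriv φ p, fun u hu => ?_⟩
  have hc : deriv φ u = deriv φ p :=
    const_of_deriv_zero_ball hd' hz u hu p (mem_ball_self hr)
  rw [← h u hu, hc, mul_comm]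

lemma euler_relation {n : ℕ} {D : Set (Fin n → ℂ)} (hDopen : IsOpen D)
    {f : (Fin n → ℂ) → (Fin n → ℂ)} (hf : DifferentiableOn ℂ f D)
    (hequiv : ∀ θ : Fin n → ℝ, ∀ z ∈ D, ∀ j : Fin n,
      f (fun k => Complex.exp ((θ k : ℂ) * Complex.I) * z k) j
        = Complex.exp ((θ j : ℂ) * Complex.I) * f z j)
    {z : Fin n → ℂ} (hz : z ∈ D) (j k : Fin n) :
    z k * fderiv ℂ (fun w => f w j) z (Pi.single k 1)
      = if k = j then f z j else 0 := by
  classical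
  set F : (Fin n → ℂ) → ℂ := fun w => f w j with hF
  have hfz : DifferentiableAt ℂ f z := hf.differentiableAt (hDopen.mem_nhds hz)
  have hFz : DifferentiableAt ℂ F z :=
    (ContinuousLinearMap.proj (R := ℂ) (φ := fun _ : Fin n => ℂ) j).differentiableAt.comp z hfz
  set c : ℝ → (Fin n → ℂ) :=
    fun t m => Complex.exp (((if m = k then t else 0 : ℝ) : ℂ) * Complex.I) * z m with hc
  have hc0 : c 0 = z := by
    funext m
    simp [hc]
  have hcd : HasDerivAt c (fun m => if m = k then Complex.I * z k else 0) 0 := by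
    rw [hasDerivAt_pi]
    intro m
    rcases eq_or_ne m k with rfl | hm
    · simp only [hc, if_pos rfl]
      have h1 : HasDerivAt (fun t : ℝ => ((t : ℂ) * Complex.I)) Complex.I 0 := by
        simpa using (Complex.ofRealCLM.hasDerivAt (x := (0:ℝ))).mul_const Complex.I
      have h2 := (h1.cexp).mul_const (z m)
      simpa using h2
    · simp only [hc, if_neg hm]
      simpa using hasDerivAt_const (0:ℝ) (Complex.exp (((0:ℝ) : ℂ) * Complex.I) * z m)
  have hcomp : HasDerivAt (fun t => F (c t))
      (fderiv ℂ F z (fun m => if m = k then Complex.I * z k else 0)) 0 := by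
    have hfd : HasFDerivAt F ((fderiv ℂ F z).restrictScalars ℝ) (c 0) := by
      rw [hc0]; exact hFz.hasFDerivAt.restrictScalars ℝ
    exact hfd.comp_hasDerivAt 0 hcd
  have hfun : (fun t => F (c t))
      = fun t : ℝ => Complex.exp (((if j = k then t else 0 : ℝ) : ℂ) * Complex.I) * F z := by
    funext t
    exact hequiv (fun m => if m = k then t else 0) z hz j
  have hother : HasDerivAt (fun t => F (c t)) (if k = j then Complex.I * F z else 0) 0 := by
    rw [hfun]
    rcases eq_or_ne k j with rfl | hkj
    · simp only [if_pos rfl]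
      have h1 : HasDerivAt (fun t : ℝ => ((t : ℂ) * Complex.I)) Complex.I 0 := by
        simpa using (Complex.ofRealCLM.hasDerivAt (x := (0:ℝ))).mul_const Complex.I
      have h2 := (h1.cexp).mul_const (F z)
      simpa using h2
    · simp only [if_neg (Ne.symm hkj), if_neg hkj]
      simpa using hasDerivAt_const (0:ℝ) (Complex.exp (((0:ℝ) : ℂ) * Complex.I) * F z)
  have huniq := hcomp.unique hother
  set V : Fin n → ℂ := Pi.single k 1 with hVdef
  have hV : (fun m => if m = k then Complex.I * z k else 0)
      = (Complex.I * z k) • V := by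
    funext m
    rcases eq_or_ne m k with rfl | hm
    · simp [hVdef, Pi.single_eq_same]
    · simp [hVdef, Pi.single_apply, hm]
  rw [hV, (fderiv ℂ F z).map_smul] at huniq
  rw [smul_eq_mul] at huniq
  show z k * fderiv ℂ F z V = if k = j then f z j else 0
  rcases eq_or_ne k j with rfl | hkj
  · rw [if_pos rfl] at huniq ⊢
    apply mul_left_cancel₀ Complex.I_ne_zero
    rw [← mul_assoc, huniq]
  · rw [if_neg hkj] at huniq ⊢
    apply mul_left_cancel₀ Complex.I_ne_zero
    rw [← mul_assoc, huniq, mul_zero]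

/-- If `f · j` agrees with `w ↦ c * w j` on an open set, its `j`-th partial there is `c`. -/
lemma lam_eq {n : ℕ} {c : ℂ} {j : Fin n} {f : (Fin n → ℂ) → (Fin n → ℂ)}
    {s : Set (Fin n → ℂ)} (hs : IsOpen s)
    (h : ∀ w ∈ s, f w j = c * w j) {w : Fin n → ℂ} (hw : w ∈ s) :
    fderiv ℂ (fun v => f v j) w (Pi.single j 1) = c := by
  classical
  have hl : HasFDerivAt (fun v : Fin n → ℂ => c * v j)
      (c • ContinuousLinearMap.proj (R := ℂ) (φ := fun _ : Fin n => ℂ) j) w :=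
    (ContinuousLinearMap.proj (R := ℂ) (φ := fun _ : Fin n => ℂ) j).hasFDerivAt.const_mul c
  have hev : (fun v => f v j) =ᶠ[nhds w] fun v => c * v j := by
    filter_upwards [hs.mem_nhds hw] with v hv
    exact h v hv
  rw [Filter.EventuallyEq.fderiv_eq hev, hl.fderiv]
  simp [Pi.single_eq_same]

lemma diag_core {n : ℕ} {D : Set (Fin n → ℂ)} (hDopen : IsOpen D) (hDconn : IsConnected D)
    {f : (Fin n → ℂ) → (Fin n → ℂ)} (hf : DifferentiableOn ℂ f D)
    (hequiv : ∀ θ : Fin n → ℝ, ∀ z ∈ D, ∀ j : Fin n,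
      f (fun k => Complex.exp ((θ k : ℂ) * Complex.I) * z k) j
        = Complex.exp ((θ j : ℂ) * Complex.I) * f z j)
    (j : Fin n) :
    ∃ c : ℂ, ∀ z ∈ D, f z j = c * z j := by
  classical
  set Λ : (Fin n → ℂ) → ℂ := fun w => fderiv ℂ (fun v => f v j) w (Pi.single j 1) with hΛ
  -- the local claim
  have loc : ∀ z ∈ D, ∃ r > 0, ball z r ⊆ D ∧ ∀ w ∈ ball z r, f w j = Λ z * w j := by
    intro z hzD
    obtain ⟨r, hr, hball⟩ := Metric.isOpen_iff.mp hDopen z hzD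
    refine ⟨r, hr, hball, ?_⟩
    -- membership of coordinate updates
    have hmem : ∀ w ∈ ball z r, ∀ (k : Fin n), ∀ u ∈ ball (z k) r,
        Function.update w k u ∈ ball z r := by
      intro w hw k u hu
      rw [mem_ball, dist_pi_lt_iff hr]
      intro m
      rcases eq_or_ne m k with rfl | hm
      · simpa using mem_ball.mp hu
      · rw [Function.update_of_ne hm]
        exact lt_of_le_of_lt (dist_le_pi_dist w z m) (mem_ball.mp hw)
    -- slice derivative
    have hsd : ∀ w ∈ ball z r, ∀ (k : Fin n), ∀ u ∈ ball (z k) r,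
        HasDerivAt (fun u' => f (Function.update w k u') j)
          (fderiv ℂ (fun v => f v j) (Function.update w k u) (Pi.single k 1)) u := by
      intro w hw k u hu
      have hs : HasDerivAt (fun u' => Function.update w k u') (Pi.single k 1) u := by
        rw [hasDerivAt_pi]
        intro m
        rcases eq_or_ne m k with rfl | hm
        · simp only [Function.update_self, Pi.single_eq_same]
          exact hasDerivAt_id u
        · simp only [Function.update_of_ne hm, Pi.single_eq_of_ne hm]
          exact hasDerivAt_const u (w m)
      have hFd : DifferentiableAt ℂ (fun v => f v j) (Function.update w k u) := by
        have hfd : DifferentiableAt ℂ f (Function.update w k u) :=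
          hf.differentiableAt (hDopen.mem_nhds (hball (hmem w hw k u hu)))
        exact (ContinuousLinearMap.proj (R := ℂ) (φ := fun _ : Fin n => ℂ) j).differentiableAt.comp _ hfd
      exact hFd.hasFDerivAt.comp_hasDerivAt u hs
    -- slice Euler equations
    have hse : ∀ w ∈ ball z r, ∀ (k : Fin n), ∀ u ∈ ball (z k) r,
        u * deriv (fun u' => f (Function.update w k u') j) u
          = if k = j then f (Function.update w k u) j else 0 := by
      intro w hw k u hu
      rw [(hsd w hw k u hu).deriv]
      have := euler_relation hDopen hf hequiv (hball (hmem w hw k u hu)) j k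
      rwa [Function.update_self] at this
    have hsdiff : ∀ w ∈ ball z r, ∀ (k : Fin n),
        DifferentiableOn ℂ (fun u' => f (Function.update w k u') j) (ball (z k) r) :=
      fun w hw k u hu => ((hsd w hw k u hu).differentiableAt).differentiableWithinAt
    -- constancy along k-slices, k ≠ j
    have hconst : ∀ w ∈ ball z r, ∀ (k : Fin n), k ≠ j →
        ∀ u ∈ ball (z k) r, ∀ u' ∈ ball (z k) r,
          f (Function.update w k u) j = f (Function.update w k u') j := by
      intro w hw k hkj
      apply const_of_deriv_zero_ball (hsdiff w hw k)
      apply deriv_eq_zero_of_mul_deriv_eq_zero isOpen_ball (hsdiff w hw k)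
      intro u hu
      rw [hse w hw k u hu, if_neg hkj]
    -- linearity along the j-slice at z
    have hz_self : z ∈ ball z r := mem_ball_self hr
    obtain ⟨c, hc⟩ := linear_of_euler_ball hr (hsdiff z hz_self j) (by
      intro u hu
      rw [hse z hz_self j u hu, if_pos rfl])
    -- reduction: replace coordinates in S (j ∉ S) by those of z
    have hred : ∀ S : Finset (Fin n), j ∉ S → ∀ w ∈ ball z r,
        f w j = f (fun m => if m ∈ S then z m else w m) j := by
      intro S
      induction S using Finset.induction_on with
      | empty =>
        intro _ w _
        have e0 : (fun m => if m ∈ (∅ : Finset (Fin n)) then z m else w m) = w := by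
          funext m; simp
        rw [e0]
      | @insert a S ha ih =>
        intro hins w hw
        have haj : a ≠ j := fun h => hins (h ▸ Finset.mem_insert_self a S)
        have hjS : j ∉ S := fun h => hins (Finset.mem_insert_of_mem h)
        set w' : Fin n → ℂ := fun m => if m ∈ S then z m else w m with hw'def
        have hw' : w' ∈ ball z r := by
          rw [mem_ball, dist_pi_lt_iff hr]
          intro m
          by_cases hm : m ∈ S
          · simp [hw'def, hm, hr]
          · simp only [hw'def, if_neg hm]
            exact lt_of_le_of_lt (dist_le_pi_dist w z m) (mem_ball.mp hw)
        have e1 : (fun m => if m ∈ insert a S then z m else w m)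
            = Function.update w' a (z a) := by
          funext m
          rcases eq_or_ne m a with rfl | hm
          · simp [Function.update_self, Finset.mem_insert_self]
          · rw [Function.update_of_ne hm, hw'def]
            simp [Finset.mem_insert, hm]
        have hwa : w' a ∈ ball (z a) r := by
          have : w' a = w a := by simp [hw'def, ha]
          rw [this]
          exact lt_of_le_of_lt (dist_le_pi_dist w z a) (mem_ball.mp hw)
        calc f w j = f w' j := ih hjS w hw
          _ = f (Function.update w' a (w' a)) j := by rw [Function.update_eq_self]
          _ = f (Function.update w' a (z a)) j :=
            hconst w' hw' a haj (w' a) hwa (z a) (mem_ball_self hr)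
          _ = f (fun m => if m ∈ insert a S then z m else w m) j := by rw [e1]
    -- conclusion of the local claim
    have hmain : ∀ w ∈ ball z r, f w j = c * w j := by
      intro w hw
      have h1 := hred (Finset.univ.erase j) (Finset.notMem_erase j _) w hw
      have e2 : (fun m => if m ∈ Finset.univ.erase j then z m else w m)
          = Function.update z j (w j) := by
        funext m
        rcases eq_or_ne m j with rfl | hm
        · simp
        · simp [Function.update_of_ne hm, Finset.mem_erase, hm]
      have hwj : w j ∈ ball (z j) r :=
        lt_of_le_of_lt (dist_le_pi_dist w z j) (mem_ball.mp hw)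
      rw [h1, e2, hc (w j) hwj]
    have hΛz : Λ z = c := lam_eq isOpen_ball hmain hz_self
    intro w hw
    rw [hΛz]
    exact hmain w hw
  -- globalization via connectedness
  obtain ⟨z₀, hz₀⟩ := hDconn.nonempty
  have hlam_loc : ∀ z ∈ D, ∃ r > 0, ball z r ⊆ D ∧ ∀ w ∈ ball z r, Λ w = Λ z := by
    intro z hz
    obtain ⟨r, hr, hball, hfw⟩ := loc z hz
    exact ⟨r, hr, hball, fun w hw => lam_eq isOpen_ball hfw hw⟩
  have key : ∀ z ∈ D, Λ z = Λ z₀ := by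
    by_contra hcon
    push_neg at hcon
    obtain ⟨z₁, hz₁, hne⟩ := hcon
    set U : Set (Fin n → ℂ) := {w | w ∈ D ∧ Λ w = Λ z₀} with hU
    set V : Set (Fin n → ℂ) := {w | w ∈ D ∧ Λ w ≠ Λ z₀} with hV
    have hUopen : IsOpen U := by
      rw [Metric.isOpen_iff]
      rintro w ⟨hwD, hwl⟩
      obtain ⟨r, hr, hball, hlam⟩ := hlam_loc w hwD
      exact ⟨r, hr, fun y hy => ⟨hball hy, (hlam y hy).trans hwl⟩⟩
    have hVopen : IsOpen V := by
      rw [Metric.isOpen_iff]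
      rintro w ⟨hwD, hwl⟩
      obtain ⟨r, hr, hball, hlam⟩ := hlam_loc w hwD
      exact ⟨r, hr, fun y hy => ⟨hball hy, (hlam y hy).symm ▸ hwl⟩⟩
    obtain ⟨p, hpD, hpU, hpV⟩ := hDconn.isPreconnected U V hUopen hVopen
      (fun w hw => by by_cases h : Λ w = Λ z₀
                      · exact Or.inl ⟨hw, h⟩
                      · exact Or.inr ⟨hw, h⟩)
      ⟨z₀, hz₀, hz₀, rfl⟩ ⟨z₁, hz₁, hz₁, hne⟩
    exact hpV.2 hpU.2
  refine ⟨Λ z₀, fun z hz => ?_⟩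
  obtain ⟨r, hr, hball, hfw⟩ := loc z hz
  rw [← key z hz]
  exact hfw z (mem_ball_self hr)

/-- Every biholomorphic automorphism of a connected Reinhardt domain
`D ⊆ ℂⁿ` that commutes with all torus rotations is a diagonal map
`z ↦ (λ₁ z₁, …, λₙ zₙ)` with all `λⱼ` nonzero. -/
theorem automorphism_commuting_with_torus_is_diagonal
    (n : ℕ) (D : Set (Fin n → ℂ)) (hDopen : IsOpen D) (hDconn : IsConnected D)
    (hRein : ∀ z ∈ D, ∀ θ : Fin n → ℝ,
      (fun j => Complex.exp ((θ j : ℂ) * Complex.I) * z j) ∈ D)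
    (f : (Fin n → ℂ) → (Fin n → ℂ))
    (hf : DifferentiableOn ℂ f D) (hfmaps : Set.MapsTo f D D)
    (g : (Fin n → ℂ) → (Fin n → ℂ))
    (hg : DifferentiableOn ℂ g D) (hgmaps : Set.MapsTo g D D)
    (hinv : Set.InvOn g f D D)
    (hequiv : ∀ θ : Fin n → ℝ, ∀ z ∈ D, ∀ j : Fin n,
      f (fun k => Complex.exp ((θ k : ℂ) * Complex.I) * z k) j
        = Complex.exp ((θ j : ℂ) * Complex.I) * f z j) :
    ∃ lam : Fin n → ℂ, (∀ j, lam j ≠ 0) ∧ ∀ z ∈ D, ∀ j, f z j = lam j * z j := by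
  classical
  choose lam hlam using fun j => diag_core hDopen hDconn hf hequiv j
  -- equivariance of the inverse map
  have hgequiv : ∀ θ : Fin n → ℝ, ∀ w ∈ D, ∀ j : Fin n,
      g (fun k => Complex.exp ((θ k : ℂ) * Complex.I) * w k) j
        = Complex.exp ((θ j : ℂ) * Complex.I) * g w j := by
    intro θ w hw j
    have hzD : g w ∈ D := hgmaps hw
    have hfg : f (g w) = w := hinv.2 hw
    have h1 : f (fun k => Complex.exp ((θ k : ℂ) * Complex.I) * g w k)
        = fun k => Complex.exp ((θ k : ℂ) * Complex.I) * w k := by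
      funext m
      rw [hequiv θ (g w) hzD m, hfg]
    rw [← h1, hinv.1 (hRein _ hzD θ)]
  choose mu hmu using fun j => diag_core hDopen hDconn hg hgequiv j
  -- a point of D with nonzero j-th coordinate, for each j
  obtain ⟨z₀, hz₀⟩ := hDconn.nonempty
  obtain ⟨ε, hε, hball⟩ := Metric.isOpen_iff.mp hDopen z₀ hz₀
  have hlam_ne : ∀ j, mu j * lam j = 1 := by
    intro j
    set a : ℂ := if z₀ j = 0 then ((ε / 2 : ℝ) : ℂ) else z₀ j with ha
    have ha0 : a ≠ 0 := by
      by_cases h : z₀ j = 0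
      · simp only [ha, if_pos h]
        exact_mod_cast ne_of_gt (by linarith : (0:ℝ) < ε / 2)
      · simpa [ha, if_neg h] using h
    have hadist : dist a (z₀ j) < ε := by
      by_cases h : z₀ j = 0
      · rw [ha, if_pos h, h, dist_zero_right, Complex.norm_real, Real.norm_eq_abs,
          abs_of_pos (by linarith : (0:ℝ) < ε / 2)]
        linarith
      · simp [ha, if_neg h, hε]
    set z₁ : Fin n → ℂ := Function.update z₀ j a with hz₁def
    have hz₁ : z₁ ∈ D := by
      apply hball
      rw [mem_ball, dist_pi_lt_iff hε]
      intro m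
      rcases eq_or_ne m j with rfl | hm
      · simpa [hz₁def] using hadist
      · simp [hz₁def, Function.update_of_ne hm, hε]
    have h1 : g (f z₁) j = mu j * f z₁ j := hmu j (f z₁) (hfmaps hz₁)
    rw [hinv.1 hz₁, hlam j z₁ hz₁] at h1
    have h2 : z₁ j = a := by simp [hz₁def]
    rw [h2] at h1
    have h3 : (mu j * lam j) * a = 1 * a := by rw [one_mul]; linear_combination -h1
    exact mul_right_cancel₀ ha0 h3
  exact ⟨lam, fun j => right_ne_zero_of_mul_eq_one (hlam_ne j), fun z hz j => hlam j z hz⟩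
end

section
/- Let Ω ⊆ ℂ be a nonempty connected open set invariant under all rotations about the origin (i.e. w ∈ Ω implies e^{iθ}w ∈ Ω for all real θ), and let g : Ω → ℂ be a holomorphic function satisfying g(e^{iθ}w) = e^{iθ} g(w) for all real θ and all w ∈ Ω. Then there exists a complex number c such that g(w) = c·w for all w ∈ Ω. -/
/-!
Differentiating `g (exp (θ I) w) = exp (θ I) g w` in `θ` at `θ = 0` gives the Euler relation
`w g'(w) = g(w)`, so `g z / z` has zero derivative away from the origin. Hence `g` is linear on a
small ball around a nonzero point of `Ω`, and the identity theorem propagates this to all of `Ω`.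
-/

open Complex Metric Set Topology

theorem hasDerivAt_exp_mul_I_mul (w : ℂ) :
    HasDerivAt (fun z : ℂ => exp (z * I) * w) (I * w) 0 := by
  simpa using (((hasDerivAt_id (0 : ℂ)).mul_const I).cexp).mul_const w

theorem mul_deriv_eq_of_rotation_equivariant {g : ℂ → ℂ} {w : ℂ} (hg : DifferentiableAt ℂ g w)
    (hequiv : ∀ θ : ℝ, g (exp (θ * I) * w) = exp (θ * I) * g w) :
    w * deriv g w = g w := by
  have hlhs : HasDerivAt (fun θ : ℝ => g (exp (θ * I) * w)) (deriv g w * (I * w)) 0 := by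
    have hgw : HasDerivAt g (deriv g w) (exp ((0 : ℂ) * I) * w) := by simpa using hg.hasDerivAt
    exact (hgw.comp 0 (hasDerivAt_exp_mul_I_mul w)).comp_ofReal
  have hrhs : HasDerivAt (fun θ : ℝ => exp (θ * I) * g w) (I * g w) 0 :=
    (hasDerivAt_exp_mul_I_mul (g w)).comp_ofReal
  have h := (hlhs.congr_of_eventuallyEq (.of_forall fun θ => (hequiv θ).symm)).unique hrhs
  exact mul_left_cancel₀ I_ne_zero (by linear_combination h)

theorem IsOpen.eqOn_const_mul_of_mul_deriv_eq {𝕜 : Type*} [RCLike 𝕜] {s : Set 𝕜} (hs : IsOpen s)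
    (hs' : IsPreconnected s) (hs0 : (0 : 𝕜) ∉ s) {g : 𝕜 → 𝕜} (hg : DifferentiableOn 𝕜 g s)
    (hEuler : ∀ z ∈ s, z * deriv g z = g z) {w : 𝕜} (hw : w ∈ s) :
    s.EqOn g (fun z => g w / w * z) := by
  have hne : ∀ z ∈ s, z ≠ 0 := fun z hz h => hs0 (h ▸ hz)
  have hderiv : ∀ z ∈ s, HasDerivAt (fun z => g z / z) 0 z := by
    intro z hz
    have h := ((hg z hz).differentiableAt (hs.mem_nhds hz)).hasDerivAt.div (hasDerivAt_id z)
      (hne z hz)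
    have h0 : (deriv g z * id z - g z * 1) / id z ^ 2 = 0 := by
      simp [mul_comm, hEuler z hz]
    rwa [h0] at h
  intro z hz
  have hconst : g z / z = g w / w :=
    hs.is_const_of_deriv_eq_zero hs'
      (fun x hx => (hderiv x hx).differentiableAt.differentiableWithinAt)
      (fun x hx => (hderiv x hx).deriv) hz hw
  show g z = g w / w * z
  rw [← hconst, div_mul_cancel₀ _ (hne z hz)]

theorem rotation_equivariant_holomorphic_is_linear_general
    (Ω : Set ℂ) (hΩopen : IsOpen Ω) (hΩconn : IsConnected Ω)
    (g : ℂ → ℂ) (hg : DifferentiableOn ℂ g Ω)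
    (hequiv : ∀ θ : ℝ, ∀ w ∈ Ω,
      g (Complex.exp ((θ : ℂ) * Complex.I) * w)
        = Complex.exp ((θ : ℂ) * Complex.I) * g w) :
    ∃ c : ℂ, ∀ w ∈ Ω, g w = c * w := by
  obtain ⟨w₀, hw₀Ω, hw₀⟩ :=
    (dense_compl_singleton (0 : ℂ)).inter_open_nonempty Ω hΩopen hΩconn.nonempty
  obtain ⟨r, hr, hball⟩ := isOpen_iff.1 (hΩopen.inter isOpen_compl_singleton) w₀ ⟨hw₀Ω, hw₀⟩
  have hEuler : ∀ z ∈ Ω, z * deriv g z = g z := fun z hz =>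
    mul_deriv_eq_of_rotation_equivariant (hg.differentiableAt (hΩopen.mem_nhds hz))
      fun θ => hequiv θ z hz
  have hlocal : g =ᶠ[𝓝 w₀] fun z => g w₀ / w₀ * z :=
    Filter.eventuallyEq_of_mem (ball_mem_nhds w₀ hr) <|
      isOpen_ball.eqOn_const_mul_of_mul_deriv_eq (convex_ball w₀ r).isPreconnected
        (fun h => (hball h).2 rfl) (hg.mono fun z hz => (hball hz).1)
        (fun z hz => hEuler z (hball hz).1) (mem_ball_self hr)
  exact ⟨g w₀ / w₀, fun w hw => (hg.analyticOnNhd hΩopen).eqOn_of_preconnected_of_eventuallyEq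
    ((differentiable_id.const_mul _).differentiableOn.analyticOnNhd hΩopen)
    hΩconn.isPreconnected hw₀Ω hlocal hw⟩

/-- A holomorphic function `g` on a nonempty connected rotation-invariant
open set `Ω ⊆ ℂ` satisfying `g(e^{iθ}w) = e^{iθ} g(w)` is of the form `g(w) = c·w`. -/
theorem rotation_equivariant_holomorphic_is_linear
    (Ω : Set ℂ) (hΩopen : IsOpen Ω) (hΩconn : IsConnected Ω)
    (hrot : ∀ w ∈ Ω, ∀ θ : ℝ, Complex.exp ((θ : ℂ) * Complex.I) * w ∈ Ω)
    (g : ℂ → ℂ) (hg : DifferentiableOn ℂ g Ω)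
    (hequiv : ∀ θ : ℝ, ∀ w ∈ Ω,
      g (Complex.exp ((θ : ℂ) * Complex.I) * w)
        = Complex.exp ((θ : ℂ) * Complex.I) * g w) :
    ∃ c : ℂ, ∀ w ∈ Ω, g w = c * w :=
  rotation_equivariant_holomorphic_is_linear_general Ω hΩopen hΩconn g hg hequiv
end

section
/- Let n ≥ 2 and let f, g : ℂ^{n-1} → ℂ be entire functions. For each t ∈ [0,1] define γ(t) : ℂⁿ → ℂⁿ by γ(t)(z_1, …, z_n) = (z_1, …, z_{n-1}, (1−t)·f(z_1, …, z_{n-1}) + exp((1−t)·g(z_1, …, z_{n-1}))·z_n). Then for every t ∈ [0,1] the map γ(t) is a bijective holomorphic map of ℂⁿ onto itself with holomorphic inverse; moreover γ(1) is the identity map and γ(0) is the overshear (z_1, …, z_n) ↦ (z_1, …, z_{n-1}, f(z_1, …, z_{n-1}) + exp(g(z_1, …, z_{n-1}))·z_n). -/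
open Complex

noncomputable section Overshear

variable {E : Type*}

/-- On `ℂ^{n-1}` every nowhere-vanishing entire multiplier has an entire logarithm, so writing it
as `exp ∘ g` loses no overshear. -/
def overshear (f g : E → ℂ) (p : E × ℂ) : E × ℂ :=
  (p.1, f p.1 + exp (g p.1) * p.2)

@[simp]
theorem overshear_apply (f g : E → ℂ) (p : E × ℂ) :
    overshear f g p = (p.1, f p.1 + exp (g p.1) * p.2) :=
  rfl

def overshearEquiv (f g : E → ℂ) : (E × ℂ) ≃ (E × ℂ) where
  toFun := overshear f g
  invFun := overshear (fun z => -(f z * exp (-g z))) (fun z => -g z)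
  left_inv p := by
    have h : exp (-g p.1) * exp (g p.1) = 1 := by rw [← exp_add, neg_add_cancel, exp_zero]
    ext
    · rfl
    · simp only [overshear_apply]
      linear_combination p.2 * h
  right_inv p := by
    have h : exp (g p.1) * exp (-g p.1) = 1 := by rw [← exp_add, add_neg_cancel, exp_zero]
    ext
    · rfl
    · simp only [overshear_apply]
      linear_combination (p.2 - f p.1) * h

theorem overshearEquiv_symm (f g : E → ℂ) :
    ⇑(overshearEquiv f g).symm = overshear (fun z => -(f z * exp (-g z))) (fun z => -g z) :=
  rfl

variable [NormedAddCommGroup E] [NormedSpace ℂ E] {f g : E → ℂ}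

theorem differentiable_overshear (hf : Differentiable ℂ f) (hg : Differentiable ℂ g) :
    Differentiable ℂ (overshear f g) :=
  differentiable_fst.prodMk <|
    (hf.comp differentiable_fst).add ((hg.comp differentiable_fst).cexp.mul differentiable_snd)

theorem differentiable_overshearEquiv_symm (hf : Differentiable ℂ f) (hg : Differentiable ℂ g) :
    Differentiable ℂ (overshearEquiv f g).symm := by
  rw [overshearEquiv_symm]
  exact differentiable_overshear (hf.mul hg.neg.cexp).neg hg.neg

end Overshear

theorem overshear_path_is_automorphism_general
    (n : ℕ)
    (f g : (Fin (n - 1) → ℂ) → ℂ)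
    (hf : Differentiable ℂ f) (hg : Differentiable ℂ g)
    (γ : ℝ → ((Fin (n - 1) → ℂ) × ℂ) → ((Fin (n - 1) → ℂ) × ℂ))
    (hγ : ∀ t : ℝ, ∀ p : (Fin (n - 1) → ℂ) × ℂ,
      γ t p = (p.1, ((1 - t : ℝ) : ℂ) * f p.1
        + Complex.exp (((1 - t : ℝ) : ℂ) * g p.1) * p.2)) :
    (∀ t ∈ Set.Icc (0 : ℝ) 1,
      Function.Bijective (γ t) ∧ Differentiable ℂ (γ t) ∧
      ∃ G : ((Fin (n - 1) → ℂ) × ℂ) → ((Fin (n - 1) → ℂ) × ℂ),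
        Differentiable ℂ G ∧ Function.LeftInverse G (γ t) ∧
        Function.RightInverse G (γ t)) ∧
    (∀ p : (Fin (n - 1) → ℂ) × ℂ, γ 1 p = p) ∧
    (∀ p : (Fin (n - 1) → ℂ) × ℂ,
      γ 0 p = (p.1, f p.1 + Complex.exp (g p.1) * p.2)) := by
  refine ⟨fun t _ => ?_, fun p => by simp [hγ], fun p => by simp [hγ]⟩
  set c : ℂ := ((1 - t : ℝ) : ℂ)
  have hcf : Differentiable ℂ (fun z => c * f z) := (differentiable_const c).mul hf
  have hcg : Differentiable ℂ (fun z => c * g z) := (differentiable_const c).mul hg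
  rw [show γ t = overshearEquiv (fun z => c * f z) (fun z => c * g z) from funext (hγ t)]
  exact ⟨Equiv.bijective _, differentiable_overshear hcf hcg, _,
    differentiable_overshearEquiv_symm hcf hcg, Equiv.left_inv _, Equiv.right_inv _⟩

/-- For `n ≥ 2` and entire `f, g` on `ℂ^{n-1}`, each map
`γ(t)(z, zₙ) = (z, (1−t)·f(z) + exp((1−t)·g(z))·zₙ)`, `t ∈ [0,1]`, is a
biholomorphic automorphism of `ℂⁿ = ℂ^{n-1} × ℂ`; moreover `γ(1) = id` and
`γ(0)` is the overshear `(z, zₙ) ↦ (z, f(z) + exp(g(z))·zₙ)`. -/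
theorem overshear_path_is_automorphism
    (n : ℕ) (hn : 2 ≤ n)
    (f g : (Fin (n - 1) → ℂ) → ℂ)
    (hf : Differentiable ℂ f) (hg : Differentiable ℂ g)
    (γ : ℝ → ((Fin (n - 1) → ℂ) × ℂ) → ((Fin (n - 1) → ℂ) × ℂ))
    (hγ : ∀ t : ℝ, ∀ p : (Fin (n - 1) → ℂ) × ℂ,
      γ t p = (p.1, ((1 - t : ℝ) : ℂ) * f p.1
        + Complex.exp (((1 - t : ℝ) : ℂ) * g p.1) * p.2)) :
    (∀ t ∈ Set.Icc (0 : ℝ) 1,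
      Function.Bijective (γ t) ∧ Differentiable ℂ (γ t) ∧
      ∃ G : ((Fin (n - 1) → ℂ) × ℂ) → ((Fin (n - 1) → ℂ) × ℂ),
        Differentiable ℂ G ∧ Function.LeftInverse G (γ t) ∧
        Function.RightInverse G (γ t)) ∧
    (∀ p : (Fin (n - 1) → ℂ) × ℂ, γ 1 p = p) ∧
    (∀ p : (Fin (n - 1) → ℂ) × ℂ,
      γ 0 p = (p.1, f p.1 + Complex.exp (g p.1) * p.2)) :=
  overshear_path_is_automorphism_general n f g hf hg γ hγ
end

section
/- Let n ≥ 2. The group Aut(ℂⁿ) of bijective holomorphic self-maps of ℂⁿ with holomorphic inverse, equipped with the compact-open topology, is connected. -/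
/-!
Every automorphism `F` of a finite-dimensional complex space `E` is joined to the identity inside
`Aut(E)` in three moves. Translating by `t • F 0` joins `F` to an automorphism fixing `0`.
Alexander's trick, `t ↦ t⁻¹ • F (t • z)`, joins that map to its derivative `A` at `0`, which
is invertible. Finally `c ↦ 1 + c • (A - 1)` is invertible except at the finitely many `c` with
`-c⁻¹` in the spectrum of `A - 1`, so a path from `1` to `0` in the complement of these points
in `ℂ` joins `A` to the identity.
-/

open Function Filter Topology Asymptotics

variable {E : Type*} [NormedAddCommGroup E] [NormedSpace ℂ E]

def IsBiholomorphic (f : E → E) : Prop :=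
  Differentiable ℂ f ∧ ∃ g : E → E, Differentiable ℂ g ∧ LeftInverse g f ∧ RightInverse g f

theorem isBiholomorphic_id : IsBiholomorphic (id : E → E) :=
  ⟨differentiable_id, id, differentiable_id, fun _ ↦ rfl, fun _ ↦ rfl⟩

theorem IsBiholomorphic.comp {f g : E → E} (hf : IsBiholomorphic f) (hg : IsBiholomorphic g) :
    IsBiholomorphic (f ∘ g) := by
  obtain ⟨hf, f', hf', hf'f, hff'⟩ := hf
  obtain ⟨hg, g', hg', hg'g, hgg'⟩ := hg
  exact ⟨hf.comp hg, g' ∘ f', hg'.comp hf', hf'f.comp hg'g, LeftInverse.comp hgg' hff'⟩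

theorem ContinuousLinearEquiv.isBiholomorphic (e : E ≃L[ℂ] E) : IsBiholomorphic e :=
  ⟨e.differentiable, e.symm, e.symm.differentiable, e.symm_apply_apply, e.apply_symm_apply⟩

theorem isBiholomorphic_sub_const (c : E) : IsBiholomorphic fun z ↦ z - c :=
  ⟨differentiable_id.sub_const c, fun z ↦ z + c, differentiable_id.add_const c,
    fun z ↦ sub_add_cancel z c, fun z ↦ add_sub_cancel_right z c⟩

theorem isBiholomorphic_const_smul {c : ℂ} (hc : c ≠ 0) : IsBiholomorphic (c • · : E → E) :=
  ⟨differentiable_id.const_smul c, (c⁻¹ • ·), differentiable_id.const_smul c⁻¹,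
    inv_smul_smul₀ hc, smul_inv_smul₀ hc⟩

theorem IsBiholomorphic.exists_hasFDerivAt_equiv {f : E → E} (hf : IsBiholomorphic f) (x : E) :
    ∃ A : E ≃L[ℂ] E, HasFDerivAt f (A : E →L[ℂ] E) x := by
  obtain ⟨hf, g, hg, hgf, hfg⟩ := hf
  have hA := (hf x).hasFDerivAt
  have hB := (hg (f x)).hasFDerivAt
  have hBA : (fderiv ℂ g (f x)).comp (fderiv ℂ f x) = .id ℂ E := by
    have := hB.comp x hA
    rw [hgf.comp_eq_id] at this
    exact this.unique (hasFDerivAt_id x)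
  have hAB : (fderiv ℂ f x).comp (fderiv ℂ g (f x)) = .id ℂ E := by
    have hA' : HasFDerivAt f (fderiv ℂ f x) (g (f x)) := by rwa [hgf x]
    have := hA'.comp (f x) hB
    rw [hfg.comp_eq_id] at this
    exact this.unique (hasFDerivAt_id _)
  exact ⟨.equivOfInverse' _ _ hAB hBA, hA⟩

theorem ContinuousMap.Homotopy.joinedIn {X Y : Type*} [TopologicalSpace X] [TopologicalSpace Y]
    {f₀ f₁ : C(X, Y)} {s : Set C(X, Y)} (H : f₀.Homotopy f₁) (hs : ∀ t, H.curry t ∈ s) :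
    JoinedIn s f₀ f₁ :=
  ⟨⟨H.curry, by ext; simp, by ext; simp⟩, hs⟩

theorem IsBiholomorphic.joinedIn_sub_const {F : C(E, E)} (hF : IsBiholomorphic F) (c : E) :
    JoinedIn {F : C(E, E) | IsBiholomorphic F} F (F - .const E c) :=
  ContinuousMap.Homotopy.joinedIn
    { toFun := fun p ↦ F p.2 - (p.1 : ℝ) • c
      continuous_toFun := by fun_prop
      map_zero_left := by simp
      map_one_left := by simp }
    fun t ↦ show IsBiholomorphic ((fun z ↦ z - (t : ℝ) • c) ∘ F) from
      (isBiholomorphic_sub_const _).comp hF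

theorem continuous_inv_smul_comp_smul {𝕜 V W : Type*} [NontriviallyNormedField 𝕜]
    [NormedAddCommGroup V] [NormedSpace 𝕜 V] [NormedAddCommGroup W] [NormedSpace 𝕜 W]
    {φ : V → W} (hφ : Continuous φ) (hφ₀ : φ =o[𝓝 0] id) :
    Continuous fun p : 𝕜 × V ↦ p.1⁻¹ • φ (p.1 • p.2) := by
  rw [continuous_iff_continuousAt]
  rintro ⟨t, z⟩
  by_cases ht : t = 0
  · subst ht
    have hsmul : Tendsto (fun p : 𝕜 × V ↦ p.1 • p.2) (𝓝 (0, z)) (𝓝 0) :=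
      (show Continuous fun p : 𝕜 × V ↦ p.1 • p.2 by fun_prop).tendsto' _ _ (zero_smul _ _)
    have hbig : (fun p : 𝕜 × V ↦ p.1 • p.2) =O[𝓝 (0, z)] Prod.fst := by
      simpa using
        (isBigO_refl Prod.fst _).smul ((continuous_snd.tendsto ((0 : 𝕜), z)).isBigO_one 𝕜)
    simpa [ContinuousAt] using
      ((hφ₀.comp_tendsto hsmul).trans_isBigO hbig).tendsto_inv_smul_nhds_zero
  · exact (continuousAt_fst.inv₀ ht).smul
      (hφ.continuousAt.comp (continuousAt_fst.smul continuousAt_snd))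

theorem IsBiholomorphic.joinedIn_of_hasFDerivAt_zero {F : C(E, E)} (hF : IsBiholomorphic F)
    (h₀ : F 0 = 0) {A : E ≃L[ℂ] E} (hA : HasFDerivAt F (A : E →L[ℂ] E) 0) :
    JoinedIn {F : C(E, E) | IsBiholomorphic F} (A : C(E, E)) F := by
  set φ : E → E := fun z ↦ F z - A z
  have hφ : Continuous φ := by fun_prop
  have hφ₀ : φ =o[𝓝 0] id :=
    (hasFDerivAt_iff_isLittleO_nhds_zero.mp hA).congr_left fun z ↦ by simp [h₀, φ]
  let s : unitInterval → ℂ := fun t ↦ ((t : ℝ) : ℂ)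
  -- Written with `φ = F - A` so that the junk value `0⁻¹ = 0` makes the slice at `t = 0` be `A`.
  let H : ContinuousMap.Homotopy (A : C(E, E)) F :=
    { toFun := fun p ↦ A p.2 + (s p.1)⁻¹ • φ (s p.1 • p.2)
      continuous_toFun := (A.continuous.comp continuous_snd).add
        ((continuous_inv_smul_comp_smul hφ hφ₀).comp
          (show Continuous fun p : unitInterval × E ↦ (s p.1, p.2) by fun_prop))
      map_zero_left := by simp [s]
      map_one_left := by simp [s, φ] }
  refine H.joinedIn fun t ↦ ?_
  have hH : ∀ z, H.curry t z = A z + (s t)⁻¹ • φ (s t • z) := fun z ↦ rfl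
  show IsBiholomorphic _
  by_cases ht : s t = 0
  · have : ⇑(H.curry t) = A := by ext z; simp [hH, ht]
    rw [this]
    exact A.isBiholomorphic
  · have : ⇑(H.curry t) = (fun z ↦ (s t)⁻¹ • z) ∘ F ∘ (fun z ↦ s t • z) := by
      ext z; simp [hH, φ, smul_sub, ht]
    rw [this]
    exact (isBiholomorphic_const_smul (inv_ne_zero ht)).comp
      (hF.comp (isBiholomorphic_const_smul ht))

theorem finite_setOf_not_isUnit_one_add_smul {K R : Type*} [Field K] [Ring R] [Algebra K R]
    {a : R} (ha : (spectrum K a).Finite) : {c : K | ¬IsUnit (1 + c • a)}.Finite := by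
  refine (ha.image fun μ ↦ -μ⁻¹).subset fun c (hc : ¬IsUnit _) ↦ ?_
  have hc₀ : c ≠ 0 := by rintro rfl; simp at hc
  refine ⟨-c⁻¹, ?_, by simp⟩
  have : algebraMap K R (-c⁻¹) - a = Units.mk0 (-c⁻¹) (by simpa using hc₀) • (1 + c • a) := by
    simp [Algebra.algebraMap_eq_smul_one, smul_add, smul_smul, hc₀, sub_eq_add_neg]
  rwa [spectrum.mem_iff, this, isUnit_smul_iff]

theorem Module.End.isBiholomorphic_of_isUnit [FiniteDimensional ℂ E] {f : Module.End ℂ E}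
    (hf : IsUnit f) : IsBiholomorphic f :=
  (LinearMap.GeneralLinearGroup.toLinearEquiv hf.unit).toContinuousLinearEquiv.isBiholomorphic

theorem ContinuousLinearEquiv.joinedIn_setOf_isBiholomorphic_id [FiniteDimensional ℂ E]
    (A : E ≃L[ℂ] E) :
    JoinedIn {F : C(E, E) | IsBiholomorphic F} (A : C(E, E)) (.id E) := by
  set N : Module.End ℂ E := (A : E →ₗ[ℂ] E) - 1
  have hgood : IsPathConnected {c : ℂ | ¬IsUnit (1 + c • N)}ᶜ :=
    (finite_setOf_not_isUnit_one_add_smul N.finite_spectrum).countable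
      |>.isPathConnected_compl_of_one_lt_rank (by simp [Complex.rank_real_complex])
  obtain ⟨γ, hγ⟩ := hgood.joinedIn 1
    (by simpa [N] using (Module.End.isUnit_iff _).mpr A.bijective) 0 (by simp)
  let H : ContinuousMap.Homotopy (A : C(E, E)) (.id E) :=
    { toFun := fun p ↦ p.2 + γ p.1 • N p.2
      continuous_toFun := by have := N.continuous_of_finiteDimensional; fun_prop
      map_zero_left := by simp [N]
      map_one_left := by simp }
  refine H.joinedIn fun t ↦ ?_
  have : ⇑(H.curry t) = ⇑(1 + γ t • N) := rfl
  show IsBiholomorphic _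
  rw [this]
  exact Module.End.isBiholomorphic_of_isUnit (not_not.mp (hγ t))

theorem isPathConnected_setOf_isBiholomorphic [FiniteDimensional ℂ E] :
    IsPathConnected {F : C(E, E) | IsBiholomorphic F} := by
  refine ⟨.id E, isBiholomorphic_id, fun {F} hF ↦ ?_⟩
  have hF₀ : IsBiholomorphic ⇑(F - .const E (F 0)) := (isBiholomorphic_sub_const _).comp hF
  obtain ⟨A, hA⟩ := hF₀.exists_hasFDerivAt_equiv 0
  exact A.joinedIn_setOf_isBiholomorphic_id.symm.trans <|
    (hF₀.joinedIn_of_hasFDerivAt_zero (sub_self _) hA).trans (hF.joinedIn_sub_const (F 0)).symm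

theorem aut_Cn_is_connected_general (n : ℕ) :
    IsConnected {F : C((Fin n → ℂ), (Fin n → ℂ)) |
      Differentiable ℂ F ∧
      ∃ G : (Fin n → ℂ) → (Fin n → ℂ),
        Differentiable ℂ G ∧ Function.LeftInverse G F ∧
        Function.RightInverse G F} :=
  isPathConnected_setOf_isBiholomorphic.isConnected

/-- For `n ≥ 2`, the group `Aut(ℂⁿ)` of biholomorphic automorphisms
of `ℂⁿ`, regarded as a subspace of `C(ℂⁿ, ℂⁿ)` with the compact-open topology,
is connected. -/
theorem aut_Cn_is_connected (n : ℕ) (hn : 2 ≤ n) :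
    IsConnected {F : C((Fin n → ℂ), (Fin n → ℂ)) |
      Differentiable ℂ F ∧
      ∃ G : (Fin n → ℂ) → (Fin n → ℂ),
        Differentiable ℂ G ∧ Function.LeftInverse G F ∧
        Function.RightInverse G F} :=
  aut_Cn_is_connected_general n
end

section
/- Let n ≥ 2, let i_1 < … < i_r (with r ≥ 1) be indices in {1, …, n}, and let D = ℂⁿ \ (⋃_{k=1}^{r} {z : z_{i_k} = 0}) be the complement in ℂⁿ of the corresponding union of coordinate hyperplanes. Then the group Aut(D) of bijective holomorphic self-maps of D with holomorphic inverse, equipped with the compact-open topology, is disconnected. -/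
/-- The complement in `ℂⁿ` of the union of the coordinate hyperplanes
`{z : z_{i k} = 0}`, `k = 1, …, r`. -/
def HyperplaneComplement (n r : ℕ) (i : Fin r → Fin n) : Set (Fin n → ℂ) :=
  {z : Fin n → ℂ | ∀ k : Fin r, z (i k) ≠ 0}

/-- `Aut(D)` for `D ⊆ ℂⁿ`: the set of continuous self-maps of `D` that are
holomorphic (i.e. restrictions to `D` of maps holomorphic on `D`) and admit a
holomorphic inverse, topologized by the compact-open topology. -/
def AutOf {n : ℕ} (D : Set (Fin n → ℂ)) : Set C(D, D) :=
  {F : C(D, D) |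
    (∃ F' : (Fin n → ℂ) → (Fin n → ℂ), DifferentiableOn ℂ F' D ∧
        ∀ z : D, (F z : Fin n → ℂ) = F' (z : Fin n → ℂ)) ∧
    ∃ G : C(D, D),
      (∃ G' : (Fin n → ℂ) → (Fin n → ℂ), DifferentiableOn ℂ G' D ∧
          ∀ z : D, (G z : Fin n → ℂ) = G' (z : Fin n → ℂ)) ∧
      (∀ z : D, G (F z) = z) ∧ (∀ z : D, F (G z) = z)}

/-!
Let `s = i₁` and let `γ` be the loop `t ↦ (1, …, e^{2πit}, …, 1)` (in coordinate `s`) in `D`.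
For `F ∈ Aut(D)`, lift the loop `t ↦ F(γ t)_s / F(γ 0)_s` through the covering
`exp : ℂ → ℂ \ {0}` starting at `0`; its endpoint is `2πi` times the winding number of
`F(γ ·)_s` around `0`. By the homotopy lifting property the endpoint depends continuously on `F`,
and it lies in the discrete fibre `exp⁻¹ {1}`, so it is constant on preconnected sets. It is `2πi`
for the identity and `-2πi` for the inversion `z_s ↦ 1 / z_s`.
-/

open Complex Function Set Real unitInterval

theorem IsCoveringMap.liftHomotopy_one_eq_of_isPreconnected {E X A : Type*} [TopologicalSpace E]
    [TopologicalSpace X] [TopologicalSpace A] {p : E → X} (cov : IsCoveringMap p)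
    (H : C(I × A, X)) (f : C(A, E)) (H_0 : ∀ a, H (0, a) = p (f a)) {x : X}
    (H_1 : ∀ a, H (1, a) = x) {s : Set A} (hs : IsPreconnected s) {a b : A}
    (ha : a ∈ s) (hb : b ∈ s) :
    cov.liftHomotopy H f H_0 (1, a) = cov.liftHomotopy H f H_0 (1, b) := by
  have lifts a : p (cov.liftHomotopy H f H_0 (1, a)) = H (1, a) :=
    congr_fun (cov.liftHomotopy_lifts H f H_0) (1, a)
  refine cov.constOn_of_comp (g := fun a ↦ cov.liftHomotopy H f H_0 (1, a)) hs ?_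
    (fun a _ a' _ ↦ ?_) ha hb
  · exact ((cov.liftHomotopy H f H_0).continuous.comp (Continuous.prodMk_right 1)).continuousOn
  · simp only [lifts, H_1]

section Winding

variable {Y : Type*} [TopologicalSpace Y] (φ : C(Y, ℂ)) (hφ : ∀ y, φ y ≠ 0) (γ : C(I, Y))

noncomputable def normalizedLoopFamily : C(I × C(Y, Y), {z : ℂ // z ≠ 0}) where
  toFun tF := ⟨φ (tF.2 (γ tF.1)) / φ (tF.2 (γ 0)), div_ne_zero (hφ _) (hφ _)⟩
  continuous_toFun := by
    have hF : Continuous fun tF : I × C(Y, Y) ↦ tF.2 (γ tF.1) :=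
      continuous_eval.comp (((ContinuousMap.continuous_precomp γ).comp continuous_snd).prodMk
        continuous_fst)
    have hF₀ : Continuous fun tF : I × C(Y, Y) ↦ tF.2 (γ 0) :=
      (continuous_eval_const (γ 0)).comp continuous_snd
    exact ((φ.continuous.comp hF).div (φ.continuous.comp hF₀) fun _ ↦ hφ _).subtype_mk _

/-- `windingLift φ hφ γ (1, F)` is `2πi` times the winding number of `φ ∘ F ∘ γ` around `0`. -/
noncomputable def windingLift : C(I × C(Y, Y), ℂ) :=
  isCoveringMap_exp.liftHomotopy (normalizedLoopFamily φ hφ γ) (.const _ 0)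
    fun F ↦ Subtype.ext (by simp [normalizedLoopFamily, div_self (hφ _)])

variable {φ hφ γ}

theorem windingLift_eq {F : C(Y, Y)} {c : I → ℂ} (hc : Continuous c)
    (hexp : ∀ t, exp (c t) = φ (F (γ t))) (t : I) :
    windingLift φ hφ γ (t, F) = c t - c 0 := by
  rw [windingLift, IsCoveringMap.liftHomotopy_apply]
  refine (congr_fun ((isCoveringMap_exp.eq_liftPath_iff _).mpr ⟨hc.sub continuous_const,
    funext fun t ↦ Subtype.ext ?_, sub_self _⟩) t).symm
  simp [normalizedLoopFamily, Complex.exp_sub, hexp]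

theorem windingLift_one_eq_of_isPreconnected (hγ : γ 1 = γ 0) {S : Set C(Y, Y)}
    (hS : IsPreconnected S) {F G : C(Y, Y)} (hF : F ∈ S) (hG : G ∈ S) :
    windingLift φ hφ γ (1, F) = windingLift φ hφ γ (1, G) :=
  isCoveringMap_exp.liftHomotopy_one_eq_of_isPreconnected _ _ _ (x := ⟨1, one_ne_zero⟩)
    (fun F ↦ Subtype.ext (by simp [normalizedLoopFamily, hγ, div_self (hφ _)])) hS hF hG

end Winding

theorem id_mem_autOf {n : ℕ} (D : Set (Fin n → ℂ)) : ContinuousMap.id D ∈ AutOf D :=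
  ⟨⟨id, differentiableOn_id, fun _ ↦ rfl⟩, .id D, ⟨id, differentiableOn_id, fun _ ↦ rfl⟩,
    fun _ ↦ rfl, fun _ ↦ rfl⟩

theorem mem_autOf_of_involutive {n : ℕ} {D : Set (Fin n → ℂ)} {F : C(D, D)}
    {F' : (Fin n → ℂ) → (Fin n → ℂ)} (hF' : DifferentiableOn ℂ F' D)
    (hF : ∀ z : D, (F z : Fin n → ℂ) = F' z) (hinv : ∀ z, F (F z) = z) : F ∈ AutOf D :=
  ⟨⟨F', hF', hF⟩, F, ⟨F', hF', hF⟩, hinv, hinv⟩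

noncomputable def invCoord {n : ℕ} (s : Fin n) (z : Fin n → ℂ) : Fin n → ℂ :=
  update z s (z s)⁻¹

theorem invCoord_invCoord {n : ℕ} (s : Fin n) (z : Fin n → ℂ) :
    invCoord s (invCoord s z) = z := by
  simp [invCoord]

theorem differentiableOn_invCoord {n : ℕ} (s : Fin n) :
    DifferentiableOn ℂ (invCoord s) {z | z s ≠ 0} := by
  intro z hz
  have hcoord j : DifferentiableWithinAt ℂ (fun w : Fin n → ℂ ↦ w j) {z | z s ≠ 0} z :=
    (differentiableAt_apply j z).differentiableWithinAt
  refine differentiableWithinAt_pi.2 fun j ↦ ?_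
  by_cases hj : j = s
  · subst hj
    have hinv : (fun w : Fin n → ℂ ↦ invCoord j w j) = fun w ↦ (w j)⁻¹ := by
      ext w
      simp [invCoord]
    rw [hinv]
    exact (hcoord j).inv hz
  · simpa [invCoord, update_of_ne hj] using hcoord j

namespace HyperplaneComplement

variable {n r : ℕ} {i : Fin r → Fin n}

theorem one_mem : (1 : Fin n → ℂ) ∈ HyperplaneComplement n r i :=
  fun _ ↦ one_ne_zero

theorem update_mem {z : Fin n → ℂ} (hz : z ∈ HyperplaneComplement n r i) (s : Fin n) {c : ℂ}
    (hc : c ≠ 0) : update z s c ∈ HyperplaneComplement n r i := by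
  intro k
  rw [update_apply]
  split_ifs
  exacts [hc, hz k]

theorem subset_setOf_ne_zero (k : Fin r) :
    HyperplaneComplement n r i ⊆ {z | z (i k) ≠ 0} :=
  fun _ hz ↦ hz k

theorem invCoord_mem {z : Fin n → ℂ} (hz : z ∈ HyperplaneComplement n r i) (k : Fin r) :
    invCoord (i k) z ∈ HyperplaneComplement n r i :=
  update_mem hz _ (inv_ne_zero (hz k))

variable (i) in
def coord (k : Fin r) : C(HyperplaneComplement n r i, ℂ) :=
  ⟨fun z ↦ (z : Fin n → ℂ) (i k), (continuous_apply _).comp continuous_subtype_val⟩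

theorem coord_ne_zero (k : Fin r) (z : HyperplaneComplement n r i) : coord i k z ≠ 0 :=
  z.2 k

variable (i) in
noncomputable def circleLoop (k : Fin r) : C(I, HyperplaneComplement n r i) where
  toFun t := ⟨update 1 (i k) (exp (2 * π * Complex.I * t)), update_mem one_mem _ (exp_ne_zero _)⟩
  continuous_toFun := by fun_prop

variable (i) in
noncomputable def invCoordMap (k : Fin r) :
    C(HyperplaneComplement n r i, HyperplaneComplement n r i) :=
  ⟨MapsTo.restrict (invCoord (i k)) _ _ fun _ hz ↦ invCoord_mem hz k,
    ((differentiableOn_invCoord (i k)).continuousOn.mono (subset_setOf_ne_zero k)).mapsToRestrict _⟩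

@[simp]
theorem invCoordMap_apply (k : Fin r) (z : HyperplaneComplement n r i) :
    (invCoordMap i k z : Fin n → ℂ) = invCoord (i k) z :=
  rfl

theorem invCoordMap_mem_autOf (k : Fin r) :
    invCoordMap i k ∈ AutOf (HyperplaneComplement n r i) :=
  mem_autOf_of_involutive ((differentiableOn_invCoord (i k)).mono (subset_setOf_ne_zero k))
    (fun _ ↦ rfl) fun _ ↦ Subtype.ext (invCoord_invCoord _ _)

theorem circleLoop_one (k : Fin r) : circleLoop i k 1 = circleLoop i k 0 := by
  ext1
  simp [circleLoop]

theorem windingLift_circleLoop_id (k : Fin r) :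
    windingLift (coord i k) (coord_ne_zero k) (circleLoop i k) (1, .id _) =
      2 * π * Complex.I := by
  rw [windingLift_eq (c := fun t ↦ 2 * π * Complex.I * t) (by fun_prop)
    fun t ↦ by simp [coord, circleLoop]]
  simp

theorem windingLift_circleLoop_invCoordMap (k : Fin r) :
    windingLift (coord i k) (coord_ne_zero k) (circleLoop i k) (1, invCoordMap i k) =
      -(2 * π * Complex.I) := by
  rw [windingLift_eq (c := fun t ↦ -(2 * π * Complex.I * t)) (by fun_prop)
    fun t ↦ by simp [coord, circleLoop, invCoord, Complex.exp_neg]]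
  simp

end HyperplaneComplement

open HyperplaneComplement

theorem aut_hyperplane_complement_disconnected_general
    (n r : ℕ) (hr : 1 ≤ r)
    (i : Fin r → Fin n) :
    ¬ IsPreconnected (AutOf (HyperplaneComplement n r i)) := by
  intro hpre
  let k : Fin r := ⟨0, hr⟩
  have h := windingLift_one_eq_of_isPreconnected (hφ := coord_ne_zero k) (circleLoop_one k) hpre
    (id_mem_autOf _) (invCoordMap_mem_autOf k)
  rw [windingLift_circleLoop_id, windingLift_circleLoop_invCoordMap, self_eq_neg] at h
  simp [pi_ne_zero] at h

/-- For `n ≥ 2` and `D = ℂⁿ` minus a nonempty union of coordinate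
hyperplanes (indices `i₁ < … < i_r`, `r ≥ 1`), the group `Aut(D)` with the
compact-open topology is disconnected. -/
theorem aut_hyperplane_complement_disconnected
    (n r : ℕ) (hn : 2 ≤ n) (hr : 1 ≤ r)
    (i : Fin r → Fin n) (hi : StrictMono i) :
    ¬ IsPreconnected (AutOf (HyperplaneComplement n r i)) :=
  aut_hyperplane_complement_disconnected_general n r hr i
end

section
/- Let n ≥ 2, let i_1 < … < i_r (with r ≥ 1) be indices in {1, …, n}, and let D = ℂⁿ \ (⋃_{k=1}^{r} {z : z_{i_k} = 0}). Then the topological groups Aut(ℂⁿ) and Aut(D), each equipped with the compact-open topology and composition as group operation, are not isomorphic as topological groups: there is no group isomorphism between them that is also a homeomorphism. -/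
/-- `Aut(ℂⁿ)`: the set of biholomorphic automorphisms of `ℂⁿ`, as a subset of
`C(ℂⁿ, ℂⁿ)` with the compact-open topology. -/
def AutCn (n : ℕ) : Set C((Fin n → ℂ), (Fin n → ℂ)) :=
  {F : C((Fin n → ℂ), (Fin n → ℂ)) |
    Differentiable ℂ F ∧
    ∃ G : C((Fin n → ℂ), (Fin n → ℂ)),
      Differentiable ℂ G ∧ (∀ z, G (F z) = z) ∧ (∀ z, F (G z) = z)}

namespace Aux15


open Complex Metric Set Finset

noncomputable section

noncomputable def Complex.abs : AbsoluteValue ℂ ℝ where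
  toFun z := ‖z‖
  map_mul' := norm_mul
  nonneg' := norm_nonneg
  eq_zero' _ := norm_eq_zero
  add_le' := norm_add_le

theorem Complex.norm_eq_abs (z : ℂ) : ‖z‖ = Complex.abs z := rfl

theorem Complex.abs_re_le_abs (z : ℂ) : |z.re| ≤ Complex.abs z := Complex.abs_re_le_norm z

theorem Complex.abs_ofReal (x : ℝ) : Complex.abs (x : ℂ) = |x| := by
  show ‖(x : ℂ)‖ = |x|
  simp

theorem Complex.abs_I : Complex.abs Complex.I = 1 := by
  show ‖Complex.I‖ = 1
  simp

theorem Complex.abs_two : Complex.abs (2 : ℂ) = 2 := by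
  show ‖(2 : ℂ)‖ = 2
  simp

theorem Complex.continuous_abs : Continuous Complex.abs := continuous_norm

theorem Complex.abs_exp_sub_one_le {x : ℂ} (hx : Complex.abs x ≤ 1) :
    Complex.abs (Complex.exp x - 1) ≤ 2 * Complex.abs x :=
  Complex.norm_exp_sub_one_le hx

abbrev II : Type := Set.Icc (0:ℝ) 1

noncomputable def pt (x : ℝ) : II := Set.projIcc 0 1 zero_le_one x

noncomputable def pfn (f : C(II, ℂ)) (N k : ℕ) : ℂ := f (pt ((k : ℝ) / (N : ℝ)))

noncomputable def WN (f : C(II, ℂ)) (N : ℕ) : ℂ :=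
  ∑ k ∈ Finset.range N, Complex.log (pfn f N (k + 1) / pfn f N k)

def GoodN (f : C(II, ℂ)) (N : ℕ) : Prop :=
  0 < N ∧ ∀ s t : II, |s.1 - t.1| ≤ 1 / N → f s / f t ∈ Metric.ball (1:ℂ) 2⁻¹

lemma ball_re {z : ℂ} (hz : z ∈ Metric.ball (1:ℂ) 2⁻¹) : 2⁻¹ < z.re := by
  rw [Metric.mem_ball, Complex.dist_eq] at hz
  have h1 : |z.re - 1| ≤ Complex.abs (z - 1) := by
    simpa using Complex.abs_re_le_abs (z - 1)
  have := abs_lt.mp (lt_of_le_of_lt h1 hz)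
  linarith [this.1]

lemma ball_ne_zero {z : ℂ} (hz : z ∈ Metric.ball (1:ℂ) 2⁻¹) : z ≠ 0 := by
  intro h
  have := ball_re hz
  rw [h] at this; norm_num at this

lemma ball_arg {z : ℂ} (hz : z ∈ Metric.ball (1:ℂ) 2⁻¹) : |z.arg| < Real.pi / 2 :=
  Complex.abs_arg_lt_pi_div_two_iff.mpr (Or.inl (lt_trans (by norm_num) (ball_re hz)))

lemma ball_slit {z : ℂ} (hz : z ∈ Metric.ball (1:ℂ) 2⁻¹) : z ∈ Complex.slitPlane :=
  Or.inl (lt_trans (by norm_num) (ball_re hz))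

lemma ball_abs {z : ℂ} (hz : z ∈ Metric.ball (1:ℂ) 2⁻¹) : 2⁻¹ ≤ Complex.abs z := by
  rw [Metric.mem_ball, Complex.dist_eq, Complex.norm_eq_abs] at hz
  have h2 : |Complex.abs 1 - Complex.abs z| ≤ Complex.abs (1 - z) := by
    simpa [Complex.dist_eq, Complex.norm_eq_abs] using abs_dist_sub_le (1:ℂ) z 0
  have h3 : Complex.abs (1 - z) = Complex.abs (z - 1) := by
    rw [show (1:ℂ) - z = -(z - 1) by ring, map_neg_eq_map]
  simp only [map_one] at h2
  have h4 := (abs_le.mp h2).2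
  linarith

lemma GoodN.ne_zero {f : C(II, ℂ)} {N : ℕ} (h : GoodN f N) (s : II) : f s ≠ 0 := by
  intro h0
  have hN : (0:ℝ) < 1 / N := by
    have := h.1
    positivity
  have := h.2 s s (by simp [hN.le])
  rw [h0, div_zero] at this
  exact absurd (ball_re this) (by norm_num)

lemma log_telescope (p : ℕ → ℂ) :
    ∀ M : ℕ, (∀ a b, a ≤ M → b ≤ M → p a / p b ∈ Metric.ball (1:ℂ) 2⁻¹) →
    ∑ b ∈ Finset.range M, Complex.log (p (b+1) / p b) = Complex.log (p M / p 0) := by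
  intro M
  induction M with
  | zero =>
    intro h
    have hp0 : p 0 ≠ 0 := by
      intro h0
      have := h 0 0 le_rfl le_rfl
      rw [h0, div_zero] at this
      exact absurd (ball_re this) (by norm_num)
    simp [div_self hp0]
  | succ M ih =>
    intro h
    have hIH := ih (fun a b ha hb => h a b (ha.trans (Nat.le_succ M)) (hb.trans (Nat.le_succ M)))
    rw [Finset.sum_range_succ, hIH]
    have hx : p M / p 0 ∈ Metric.ball (1:ℂ) 2⁻¹ := h M 0 (Nat.le_succ M) (Nat.zero_le _)
    have hy : p (M+1) / p M ∈ Metric.ball (1:ℂ) 2⁻¹ := h (M+1) M le_rfl (Nat.le_succ M)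
    have hpM : p M ≠ 0 := by
      intro h0
      have := h M M (Nat.le_succ M) (Nat.le_succ M)
      rw [h0, div_zero] at this
      exact absurd (ball_re this) (by norm_num)
    have hmul : (p M / p 0) * (p (M+1) / p M) = p (M+1) / p 0 := by
      rw [div_mul_div_comm, mul_comm (p M) (p (M+1)), mul_comm (p 0) (p M),
        mul_comm (p (M+1)) (p M)]
      exact mul_div_mul_left _ _ hpM
    rw [← hmul, Complex.log_mul (ball_ne_zero hx) (ball_ne_zero hy)]
    constructor
    · have h1 := abs_lt.mp (ball_arg hx)
      have h2 := abs_lt.mp (ball_arg hy)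
      linarith [h1.1, h2.1]
    · have h1 := abs_lt.mp (ball_arg hx)
      have h2 := abs_lt.mp (ball_arg hy)
      linarith [h1.2, h2.2]

lemma exp_sum_log (p : ℕ → ℂ) (N : ℕ) (h : ∀ k, k ≤ N → p k ≠ 0) :
    Complex.exp (∑ k ∈ Finset.range N, Complex.log (p (k+1) / p k)) = p N / p 0 := by
  induction N with
  | zero => simp [div_self (h 0 le_rfl)]
  | succ N ih =>
    rw [Finset.sum_range_succ, Complex.exp_add,
      ih (fun k hk => h k (hk.trans (Nat.le_succ N))),
      Complex.exp_log (div_ne_zero (h (N+1) le_rfl) (h N (Nat.le_succ N)))]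
    rw [div_mul_div_comm, mul_comm (p N) (p (N+1)), mul_comm (p 0) (p N),
      mul_comm (p (N+1)) (p N)]
    exact mul_div_mul_left _ _ (h N (Nat.le_succ N))

lemma pt_val {x : ℝ} (hx : x ∈ Set.Icc (0:ℝ) 1) : (pt x).1 = x := by
  rw [pt, Set.projIcc_of_mem zero_le_one hx]

lemma WN_mul (f : C(II, ℂ)) (N M : ℕ) (hM : 0 < M) (hg : GoodN f N) :
    WN f (N * M) = WN f N := by
  obtain ⟨hN, hb⟩ := hg
  have hNR : (0:ℝ) < N := Nat.cast_pos.mpr hN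
  have hMR : (0:ℝ) < M := Nat.cast_pos.mpr hM
  have hmem : ∀ b : ℕ, b ≤ N * M → ((b : ℝ) / ((N * M : ℕ) : ℝ)) ∈ Set.Icc (0:ℝ) 1 := by
    intro b hbb
    constructor
    · positivity
    · rw [div_le_one (by push_cast; positivity)]
      exact_mod_cast hbb
  have key : ∀ a : ℕ, a ≤ N →
      ∑ k ∈ Finset.range (a * M), Complex.log (pfn f (N*M) (k+1) / pfn f (N*M) k)
        = ∑ j ∈ Finset.range a, Complex.log (pfn f N (j+1) / pfn f N j) := by
    intro a
    induction a with
    | zero => simp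
    | succ a ih =>
      intro ha
      have ha' : a ≤ N := (Nat.le_succ a).trans ha
      rw [Nat.succ_mul, Finset.sum_range_add, ih ha', Finset.sum_range_succ]
      congr 1
      have harg : ∀ b c : ℕ, b ≤ M → c ≤ M →
          pfn f (N*M) (a*M + b) / pfn f (N*M) (a*M + c) ∈ Metric.ball (1:ℂ) 2⁻¹ := by
        intro b c hbM hcM
        have hxb : a*M + b ≤ N*M := by
          calc a*M + b ≤ a*M + M := by omega
          _ = (a+1)*M := by ring
          _ ≤ N*M := Nat.mul_le_mul_right M ha
        have hxc : a*M + c ≤ N*M := by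
          calc a*M + c ≤ a*M + M := by omega
          _ = (a+1)*M := by ring
          _ ≤ N*M := Nat.mul_le_mul_right M ha
        apply hb
        rw [pt_val (hmem _ hxb), pt_val (hmem _ hxc)]
        have hNM : ((N*M : ℕ):ℝ) = (N:ℝ)*(M:ℝ) := by push_cast; ring
        rw [div_sub_div_same, hNM]
        have hnum : |((a*M + b : ℕ):ℝ) - ((a*M + c : ℕ):ℝ)| ≤ (M:ℝ) := by
          push_cast
          rw [abs_le]
          constructor <;> [nlinarith [Nat.cast_nonneg (α := ℝ) b, (Nat.cast_le (α := ℝ)).mpr hcM];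
            nlinarith [Nat.cast_nonneg (α := ℝ) c, (Nat.cast_le (α := ℝ)).mpr hbM]]
        calc |(((a*M + b : ℕ):ℝ) - ((a*M + c : ℕ):ℝ)) / ((N:ℝ)*(M:ℝ))|
            = |((a*M + b : ℕ):ℝ) - ((a*M + c : ℕ):ℝ)| / ((N:ℝ)*(M:ℝ)) := by
              rw [abs_div, abs_of_pos (mul_pos hNR hMR)]
          _ ≤ (M:ℝ) / ((N:ℝ)*(M:ℝ)) := by gcongr
          _ = 1 / (N:ℝ) := by field_simp
      have htel := log_telescope (fun b => pfn f (N*M) (a*M + b)) M harg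
      have hsum : ∑ x ∈ Finset.range M,
            Complex.log (pfn f (N*M) (a*M + x + 1) / pfn f (N*M) (a*M + x))
          = Complex.log (pfn f (N*M) (a*M + M) / pfn f (N*M) (a*M + 0)) := by
        rw [← htel]
        apply Finset.sum_congr rfl
        intro x _
        rw [Nat.add_assoc]
      rw [hsum]
      have e1 : pfn f (N*M) (a*M + M) = pfn f N (a+1) := by
        simp only [pfn]
        congr 1
        apply Subtype.ext
        rw [pt_val, pt_val]
        · push_cast; field_simp
        · constructor
          · positivity
          · rw [div_le_one hNR]; exact_mod_cast ha
        · apply hmem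
          calc a*M + M = (a+1)*M := by ring
          _ ≤ N*M := Nat.mul_le_mul_right M ha
      have e2 : pfn f (N*M) (a*M + 0) = pfn f N a := by
        simp only [pfn]
        congr 1
        apply Subtype.ext
        rw [pt_val, pt_val]
        · push_cast; field_simp; ring
        · constructor
          · positivity
          · rw [div_le_one hNR]; exact_mod_cast ha'
        · apply hmem
          calc a*M + 0 = a*M := by ring
          _ ≤ N*M := Nat.mul_le_mul_right M ha'
      rw [e1, e2]
  exact key N le_rfl

open Classical in
noncomputable def w (f : C(II, ℂ)) : ℂ := if h : ∃ N, GoodN f N then WN f h.choose else 0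

lemma w_eq {f : C(II, ℂ)} {N : ℕ} (h : GoodN f N) : w f = WN f N := by
  have hex : ∃ N, GoodN f N := ⟨N, h⟩
  rw [w]
  rw [dif_pos hex]
  have h₀ := hex.choose_spec
  calc WN f hex.choose = WN f (hex.choose * N) := (WN_mul f _ N h.1 h₀).symm
    _ = WN f (N * hex.choose) := by rw [Nat.mul_comm]
    _ = WN f N := WN_mul f N _ h₀.1 h

lemma log_lip {x y : ℂ} (hx : x ∈ Metric.ball (1:ℂ) 2⁻¹) (hy : y ∈ Metric.ball (1:ℂ) 2⁻¹) :
    Complex.abs (Complex.log x - Complex.log y) ≤ 2 * Complex.abs (x - y) := by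
  have h := Convex.norm_image_sub_le_of_norm_hasDerivWithin_le
    (f := Complex.log) (f' := fun z => z⁻¹) (s := Metric.ball (1:ℂ) 2⁻¹) (C := 2)
    (fun z hz => (Complex.hasDerivAt_log (ball_slit hz)).hasDerivWithinAt)
    (fun z hz => by
      rw [norm_inv, Complex.norm_eq_abs]
      have h1 := ball_abs hz
      have h2 : (0:ℝ) < Complex.abs z := lt_of_lt_of_le (by norm_num) h1
      rw [show (2:ℝ) = (2⁻¹)⁻¹ by norm_num]
      exact inv_anti₀ (by norm_num) h1)
    (convex_ball _ _) hy hx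
  simpa [Complex.norm_eq_abs] using h

lemma ratio_mem {f : C(II,ℂ)} {N : ℕ} (h : GoodN f N) {k : ℕ} (hk : k < N) :
    pfn f N (k+1) / pfn f N k ∈ Metric.ball (1:ℂ) 2⁻¹ := by
  obtain ⟨hN, hb⟩ := h
  have hNR : (0:ℝ) < N := Nat.cast_pos.mpr hN
  apply hb
  have h1 : ((k+1:ℕ):ℝ)/(N:ℝ) ∈ Set.Icc (0:ℝ) 1 :=
    ⟨by positivity, by rw [div_le_one hNR]; exact_mod_cast hk⟩
  have h2 : ((k:ℕ):ℝ)/(N:ℝ) ∈ Set.Icc (0:ℝ) 1 :=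
    ⟨by positivity, by rw [div_le_one hNR]; exact_mod_cast hk.le⟩
  rw [pt_val h1, pt_val h2]
  have : ((k+1:ℕ):ℝ)/(N:ℝ) - ((k:ℕ):ℝ)/(N:ℝ) = 1/(N:ℝ) := by push_cast; field_simp; ring
  rw [this, abs_of_pos (by positivity)]

lemma pfn_zero (f : C(II,ℂ)) (N : ℕ) : pfn f N 0 = f (pt 0) := by
  simp [pfn]

lemma pfn_last (f : C(II,ℂ)) (N : ℕ) (hN : 0 < N) : pfn f N N = f (pt 1) := by
  have hNR : (0:ℝ) < N := Nat.cast_pos.mpr hN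
  simp only [pfn]
  rw [div_self hNR.ne']

lemma exp_WN {f : C(II,ℂ)} {N : ℕ} (h : GoodN f N) (hl : f (pt 1) = f (pt 0)) :
    Complex.exp (WN f N) = 1 := by
  rw [WN, exp_sum_log (fun k => pfn f N k) N (fun k _ => h.ne_zero _),
    pfn_last f N h.1, pfn_zero, hl, div_self (h.ne_zero _)]

lemma WN_eq_of_close {f g : C(II, ℂ)} {N : ℕ}
    (hgf : GoodN f N) (hgg : GoodN g N)
    (hlf : f (pt 1) = f (pt 0)) (hlg : g (pt 1) = g (pt 0))
    (hclose : ∀ k, k < N → Complex.abs ((pfn f N (k+1) / pfn f N k)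
      - (pfn g N (k+1) / pfn g N k)) ≤ Real.pi / (4 * N)) :
    WN f N = WN g N := by
  have hN := hgf.1
  have hNR : (0:ℝ) < N := Nat.cast_pos.mpr hN
  have habs : Complex.abs (WN f N - WN g N) ≤ Real.pi / 2 := by
    have hd : WN f N - WN g N = ∑ k ∈ Finset.range N,
        (Complex.log (pfn f N (k+1)/pfn f N k) - Complex.log (pfn g N (k+1)/pfn g N k)) := by
      rw [WN, WN, Finset.sum_sub_distrib]
    rw [hd, ← Complex.norm_eq_abs]
    calc ‖∑ k ∈ Finset.range N, (Complex.log (pfn f N (k+1)/pfn f N k)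
          - Complex.log (pfn g N (k+1)/pfn g N k))‖
        ≤ ∑ k ∈ Finset.range N, ‖Complex.log (pfn f N (k+1)/pfn f N k)
          - Complex.log (pfn g N (k+1)/pfn g N k)‖ := norm_sum_le _ _
      _ ≤ ∑ k ∈ Finset.range N, (2 * (Real.pi / (4*N))) := by
          apply Finset.sum_le_sum
          intro k hk
          rw [Finset.mem_range] at hk
          rw [Complex.norm_eq_abs]
          calc Complex.abs (Complex.log (pfn f N (k+1)/pfn f N k)
                - Complex.log (pfn g N (k+1)/pfn g N k))
              ≤ 2 * Complex.abs ((pfn f N (k+1)/pfn f N k) - (pfn g N (k+1)/pfn g N k)) :=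
                log_lip (ratio_mem hgf hk) (ratio_mem hgg hk)
            _ ≤ 2 * (Real.pi / (4*N)) := by
                have := hclose k hk
                linarith
      _ = N * (2 * (Real.pi / (4*N))) := by
          rw [Finset.sum_const, Finset.card_range, nsmul_eq_mul]
      _ = Real.pi / 2 := by field_simp; ring
  have hint : Complex.exp (WN f N - WN g N) = 1 := by
    rw [Complex.exp_sub, exp_WN hgf hlf, exp_WN hgg hlg, div_one]
  obtain ⟨m, hm⟩ := Complex.exp_eq_one_iff.mp hint
  have habs2 : Complex.abs (WN f N - WN g N) = |(m:ℝ)| * (2*Real.pi) := by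
    rw [hm]
    rw [map_mul, map_mul, map_mul]
    have h1 : Complex.abs (m:ℂ) = |(m:ℝ)| := by
      rw [← Complex.abs_ofReal]
      norm_cast
    rw [h1, Complex.abs_I, Complex.abs_two, Complex.abs_ofReal,
      abs_of_pos Real.pi_pos]
    ring
  have hm0 : m = 0 := by
    by_contra hmne
    have h1 : (1:ℝ) ≤ |(m:ℝ)| := by
      have := Int.one_le_abs (by omega : m ≠ 0)
      calc (1:ℝ) = ((1:ℤ):ℝ) := by norm_num
        _ ≤ ((|m|:ℤ):ℝ) := by exact_mod_cast this
        _ = |(m:ℝ)| := by push_cast; ring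
    have hpi := Real.pi_pos
    rw [habs2] at habs
    nlinarith
  rw [hm0] at hm
  simp only [Int.cast_zero, zero_mul] at hm
  exact sub_eq_zero.mp hm

lemma exists_eps (f₀ : C(II, ℂ)) (h0 : ∀ t, f₀ t ≠ 0) (hloop : f₀ (pt 1) = f₀ (pt 0)) :
    ∃ ε > 0, ∀ g : C(II, ℂ), g (pt 1) = g (pt 0) →
      (∀ t, Complex.abs (g t - f₀ t) ≤ ε) → w g = w f₀ := by
  -- minimum of |f₀|
  obtain ⟨tmin, -, hmin⟩ := isCompact_univ.exists_isMinOn (Set.univ_nonempty)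
    (f := fun t => Complex.abs (f₀ t)) (Complex.continuous_abs.comp f₀.continuous).continuousOn
  obtain ⟨tmax, -, hmax⟩ := isCompact_univ.exists_isMaxOn (Set.univ_nonempty)
    (f := fun t => Complex.abs (f₀ t)) (Complex.continuous_abs.comp f₀.continuous).continuousOn
  set m : ℝ := Complex.abs (f₀ tmin) with hm_def
  set M₀ : ℝ := Complex.abs (f₀ tmax) with hM0_def
  have hm : 0 < m := Complex.abs.pos (h0 tmin)
  have hmle : ∀ t, m ≤ Complex.abs (f₀ t) := fun t => hmin (Set.mem_univ t)
  have hMle : ∀ t, Complex.abs (f₀ t) ≤ M₀ := fun t => hmax (Set.mem_univ t)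
  have hmM : m ≤ M₀ := hmle tmax
  -- uniform continuity
  have huc : UniformContinuous f₀ := CompactSpace.uniformContinuous_of_continuous f₀.continuous
  obtain ⟨δ, hδ, hucd⟩ := Metric.uniformContinuous_iff.mp huc (m/8) (by positivity)
  obtain ⟨n₀, hn₀⟩ := exists_nat_one_div_lt hδ
  set N : ℕ := n₀ + 1 with hN_def
  have hNpos : 0 < N := Nat.succ_pos _
  have hNR : (0:ℝ) < N := Nat.cast_pos.mpr hNpos
  have hNδ : 1 / (N:ℝ) < δ := by
    have : ((N:ℝ)) = (n₀:ℝ) + 1 := by rw [hN_def]; push_cast; ring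
    rw [this]; exact hn₀
  have hpi := Real.pi_pos
  set ε : ℝ := min (m/32) (Real.pi * m^2 / (8 * N * (m + M₀))) with hε_def
  have hε : 0 < ε := by
    apply lt_min (by positivity)
    apply div_pos (by positivity)
    have : (0:ℝ) < m + M₀ := by nlinarith
    positivity
  refine ⟨ε, hε, ?_⟩
  intro g hlg hclose
  have hε1 : ε ≤ m/32 := min_le_left _ _
  have hε2 : ε ≤ Real.pi * m^2 / (8 * N * (m + M₀)) := min_le_right _ _
  -- g is bounded below
  have hgl : ∀ t, m/2 ≤ Complex.abs (g t) := by
    intro t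
    have h1 := hclose t
    have h2 := hmle t
    have h3 : Complex.abs (f₀ t) - Complex.abs (g t) ≤ Complex.abs (g t - f₀ t) := by
      have := abs_dist_sub_le (g t) (f₀ t) 0
      simp only [Complex.dist_eq, sub_zero, Complex.norm_eq_abs] at this
      have h4 := (abs_le.mp this).1
      linarith
    linarith
  have hgne : ∀ t, g t ≠ 0 := by
    intro t h
    have := hgl t
    rw [h] at this
    simp only [map_zero] at this
    linarith
  -- dist of subtype points
  have hdist : ∀ s t : II, |s.1 - t.1| ≤ 1/(N:ℝ) → Complex.abs (f₀ s - f₀ t) < m/8 := by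
    intro s t hst
    have : dist s t < δ := by
      rw [Subtype.dist_eq, Real.dist_eq]
      exact lt_of_le_of_lt hst hNδ
    have := hucd this
    rwa [Complex.dist_eq] at this
  -- GoodN f₀ N
  have hgf₀ : GoodN f₀ N := by
    refine ⟨hNpos, fun s t hst => ?_⟩
    rw [Metric.mem_ball, Complex.dist_eq, Complex.norm_eq_abs]
    have hne := h0 t
    have : f₀ s / f₀ t - 1 = (f₀ s - f₀ t) / f₀ t := by field_simp
    rw [this, map_div₀]
    have h1 := hdist s t hst
    have h2 := hmle t
    rw [div_lt_iff₀ (lt_of_lt_of_le hm h2)]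
    calc Complex.abs (f₀ s - f₀ t) < m/8 := h1
      _ ≤ 2⁻¹ * m := by linarith
      _ ≤ 2⁻¹ * Complex.abs (f₀ t) := by linarith
  -- GoodN g N
  have hgg : GoodN g N := by
    refine ⟨hNpos, fun s t hst => ?_⟩
    rw [Metric.mem_ball, Complex.dist_eq, Complex.norm_eq_abs]
    have hne := hgne t
    have : g s / g t - 1 = (g s - g t) / g t := by field_simp
    rw [this, map_div₀]
    have h1 := hdist s t hst
    have h2 := hgl t
    have h3 : Complex.abs (g s - g t) ≤ Complex.abs (f₀ s - f₀ t) + 2*ε := by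
      calc Complex.abs (g s - g t)
          = Complex.abs ((g s - f₀ s) + (f₀ s - f₀ t) + (f₀ t - g t)) := by ring_nf
        _ ≤ Complex.abs ((g s - f₀ s) + (f₀ s - f₀ t)) + Complex.abs (f₀ t - g t) :=
            Complex.abs.add_le _ _
        _ ≤ Complex.abs (g s - f₀ s) + Complex.abs (f₀ s - f₀ t) + Complex.abs (f₀ t - g t) := by
            have := Complex.abs.add_le (g s - f₀ s) (f₀ s - f₀ t)
            linarith
        _ ≤ ε + Complex.abs (f₀ s - f₀ t) + ε := by
            have ha := hclose s
            have hb := hclose t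
            have hc : Complex.abs (f₀ t - g t) = Complex.abs (g t - f₀ t) := by
              rw [show f₀ t - g t = -(g t - f₀ t) by ring, map_neg_eq_map]
            linarith
        _ = Complex.abs (f₀ s - f₀ t) + 2*ε := by ring
    rw [div_lt_iff₀ (lt_of_lt_of_le (half_pos hm) h2)]
    calc Complex.abs (g s - g t) ≤ Complex.abs (f₀ s - f₀ t) + 2*ε := h3
      _ < m/8 + 2*(m/32) := by linarith
      _ = 3*m/16 := by ring
      _ ≤ 2⁻¹ * (m/2) := by linarith
      _ ≤ 2⁻¹ * Complex.abs (g t) := by linarith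
  -- closeness of ratios
  have hratio : ∀ k, k < N → Complex.abs ((pfn g N (k+1) / pfn g N k)
      - (pfn f₀ N (k+1) / pfn f₀ N k)) ≤ Real.pi / (4 * N) := by
    intro k hk
    set s : II := pt (((k+1:ℕ):ℝ)/(N:ℝ)) with hs_def
    set t : II := pt (((k:ℕ):ℝ)/(N:ℝ)) with ht_def
    have hfs : pfn g N (k+1) = g s := rfl
    have hats : pfn f₀ N (k+1) = f₀ s := rfl
    have hft : pfn g N k = g t := rfl
    have hatt : pfn f₀ N k = f₀ t := rfl
    rw [hfs, hats, hft, hatt]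
    have hb : g t ≠ 0 := hgne t
    have hb₀ : f₀ t ≠ 0 := h0 t
    have hkey : g s / g t - f₀ s / f₀ t
        = (g s - f₀ s) / g t + f₀ s * (f₀ t - g t) / (g t * f₀ t) := by
      field_simp
      ring
    rw [hkey]
    have h1 : Complex.abs ((g s - f₀ s) / g t) ≤ ε / (m/2) := by
      rw [map_div₀]
      apply div_le_div₀ (by positivity) (hclose s) (by positivity) (hgl t)
    have h2 : Complex.abs (f₀ s * (f₀ t - g t) / (g t * f₀ t)) ≤ M₀ * ε / ((m/2) * m) := by
      rw [map_div₀, map_mul, map_mul]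
      apply div_le_div₀ (by positivity)
      · apply mul_le_mul (hMle s) ?_ (by positivity) (by positivity)
        have hc : Complex.abs (f₀ t - g t) = Complex.abs (g t - f₀ t) := by
          rw [show f₀ t - g t = -(g t - f₀ t) by ring, map_neg_eq_map]
        rw [hc]; exact hclose t
      · positivity
      · apply mul_le_mul (hgl t) (hmle t) (by positivity) (by positivity)
    calc Complex.abs ((g s - f₀ s) / g t + f₀ s * (f₀ t - g t) / (g t * f₀ t))
        ≤ Complex.abs ((g s - f₀ s) / g t) + Complex.abs (f₀ s * (f₀ t - g t) / (g t * f₀ t)) :=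
          Complex.abs.add_le _ _
      _ ≤ ε / (m/2) + M₀ * ε / ((m/2) * m) := by linarith
      _ = 2 * ε * (m + M₀) / m^2 := by field_simp
      _ ≤ Real.pi / (4 * N) := by
          rw [div_le_div_iff₀ (by positivity) (by positivity)]
          have : ε * (8 * N * (m + M₀)) ≤ Real.pi * m^2 := by
            rw [← le_div_iff₀ (by positivity)]
            exact hε2.trans (le_of_eq (by ring))
          nlinarith [hε.le, hm.le, hmM, hNR.le]
  rw [w_eq hgg, w_eq hgf₀]
  exact WN_eq_of_close hgg hgf₀ hlg hloop hratio

noncomputable def expLoop (a : ℤ) : C(II, ℂ) :=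
  ⟨fun t => Complex.exp (Complex.ofReal ((a:ℝ) * t.1) * (2 * Real.pi * Complex.I)),
   Complex.continuous_exp.comp ((Complex.continuous_ofReal.comp
     (continuous_const.mul continuous_subtype_val)).mul continuous_const)⟩

lemma expLoop_apply (a : ℤ) (t : II) :
    expLoop a t = Complex.exp (Complex.ofReal ((a:ℝ) * t.1) * (2 * Real.pi * Complex.I)) := rfl

lemma expLoop_loop (a : ℤ) : expLoop a (pt 1) = expLoop a (pt 0) := by
  rw [expLoop_apply, expLoop_apply, pt, pt,
    Set.projIcc_of_mem zero_le_one (by norm_num : (1:ℝ) ∈ Set.Icc (0:ℝ) 1),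
    Set.projIcc_of_mem zero_le_one (by norm_num : (0:ℝ) ∈ Set.Icc (0:ℝ) 1)]
  simp only [mul_one, mul_zero, Complex.ofReal_zero, zero_mul, Complex.exp_zero]
  have : (Complex.ofReal ((a:ℝ))) * (2 * Real.pi * Complex.I)
      = (a:ℂ) * (2 * Real.pi * Complex.I) := by push_cast; ring
  rw [this, Complex.exp_int_mul_two_pi_mul_I]

lemma expLoop_good (a : ℤ) (ha : |a| ≤ 1) : GoodN (expLoop a) 26 := by
  have hpi := Real.pi_pos
  have haR : |(a:ℝ)| ≤ 1 := by exact_mod_cast ha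
  refine ⟨by norm_num, fun s t hst => ?_⟩
  rw [expLoop_apply, expLoop_apply, ← Complex.exp_sub]
  have hsub : Complex.ofReal ((a:ℝ) * s.1) * (2 * Real.pi * Complex.I)
      - Complex.ofReal ((a:ℝ) * t.1) * (2 * Real.pi * Complex.I)
      = Complex.ofReal ((a:ℝ) * (s.1 - t.1)) * (2 * Real.pi * Complex.I) := by
    push_cast; ring
  rw [hsub]
  set z : ℂ := Complex.ofReal ((a:ℝ) * (s.1 - t.1)) * (2 * Real.pi * Complex.I) with hz
  have habs : Complex.abs z = |(a:ℝ) * (s.1 - t.1)| * (2 * Real.pi) := by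
    rw [hz, map_mul, Complex.abs_ofReal, map_mul, map_mul, Complex.abs_I,
      Complex.abs_two, Complex.abs_ofReal, abs_of_pos hpi]
    ring
  have hb : |(a:ℝ) * (s.1 - t.1)| ≤ 1/26 := by
    rw [abs_mul]
    calc |(a:ℝ)| * |s.1 - t.1| ≤ 1 * (1/26) := by
          apply mul_le_mul haR hst (abs_nonneg _) zero_le_one
      _ = 1/26 := by ring
  have hz1 : Complex.abs z ≤ 1 := by
    rw [habs]
    nlinarith [Real.pi_lt_d2]
  have h2 := Complex.abs_exp_sub_one_le hz1
  rw [Metric.mem_ball, Complex.dist_eq]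
  calc Complex.abs (Complex.exp z - 1) ≤ 2 * Complex.abs z := h2
    _ ≤ 2 * ((1/26) * (2 * Real.pi)) := by
        rw [habs]
        have : |(a:ℝ) * (s.1 - t.1)| * (2*Real.pi) ≤ (1/26) * (2*Real.pi) := by
          apply mul_le_mul_of_nonneg_right hb (by positivity)
        linarith
    _ < 2⁻¹ := by nlinarith [Real.pi_lt_d2]

lemma expLoop_w (a : ℤ) (ha : |a| ≤ 1) :
    w (expLoop a) = (a:ℂ) * (2 * Real.pi * Complex.I) := by
  have hpi := Real.pi_pos
  have haR : |(a:ℝ)| ≤ 1 := by exact_mod_cast ha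
  have hr' := abs_le.mp haR
  have hr : -(1/26 : ℝ) ≤ (a:ℝ)/26 ∧ ((a:ℝ)/26 : ℝ) ≤ 1/26 := by
    constructor <;> [linarith; linarith]
  rw [w_eq (expLoop_good a ha)]
  set c : ℂ := Complex.ofReal ((a:ℝ)/26) * (2 * Real.pi * Complex.I) with hc
  have hterm : ∀ k : ℕ, k < 26 →
      Complex.log (pfn (expLoop a) 26 (k+1) / pfn (expLoop a) 26 k) = c := by
    intro k hk
    have h1 : ((k+1:ℕ):ℝ)/((26:ℕ):ℝ) ∈ Set.Icc (0:ℝ) 1 :=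
      ⟨by positivity, by rw [div_le_one (by norm_num)]; exact_mod_cast hk⟩
    have h2 : ((k:ℕ):ℝ)/((26:ℕ):ℝ) ∈ Set.Icc (0:ℝ) 1 :=
      ⟨by positivity, by rw [div_le_one (by norm_num)]; exact_mod_cast hk.le⟩
    have e1 : pfn (expLoop a) 26 (k+1)
        = Complex.exp (Complex.ofReal ((a:ℝ) * (((k+1:ℕ):ℝ)/((26:ℕ):ℝ))) * (2 * Real.pi * Complex.I)) := by
      simp only [pfn, expLoop_apply]
      congr 3
      rw [pt_val h1]
    have e2 : pfn (expLoop a) 26 k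
        = Complex.exp (Complex.ofReal ((a:ℝ) * (((k:ℕ):ℝ)/((26:ℕ):ℝ))) * (2 * Real.pi * Complex.I)) := by
      simp only [pfn, expLoop_apply]
      congr 3
      rw [pt_val h2]
    rw [e1, e2, ← Complex.exp_sub]
    have hsub : Complex.ofReal ((a:ℝ) * (((k+1:ℕ):ℝ)/((26:ℕ):ℝ))) * (2 * Real.pi * Complex.I)
        - Complex.ofReal ((a:ℝ) * (((k:ℕ):ℝ)/((26:ℕ):ℝ))) * (2 * Real.pi * Complex.I) = c := by
      rw [hc]; push_cast; ring
    rw [hsub]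
    have hz : c = (((a:ℝ)/26*(2*Real.pi) : ℝ) : ℂ) * Complex.I := by
      rw [hc]; push_cast; ring
    have him : c.im = (a:ℝ)/26*(2*Real.pi) := by
      rw [hz]
      simp [Complex.mul_im]
    apply Complex.log_exp <;> rw [him]
    · nlinarith [hr.1]
    · nlinarith [hr.2]
  rw [WN, Finset.sum_congr rfl (fun k hk => hterm k (Finset.mem_range.mp hk)),
    Finset.sum_const, Finset.card_range, nsmul_eq_mul, hc]
  push_cast
  ring

end

section PartTwo

variable {n r : ℕ} (i : Fin r → Fin n) (k₀ : Fin r)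

noncomputable def γfun : II → (Fin n → ℂ) := fun t _ => expLoop 1 t

lemma γmem (t : II) : γfun (n := n) t ∈ HyperplaneComplement n r i := by
  intro k
  simp only [γfun, expLoop_apply]
  exact Complex.exp_ne_zero _

noncomputable def γc : C(II, HyperplaneComplement n r i) :=
  ⟨fun t => ⟨γfun t, γmem i t⟩,
   Continuous.subtype_mk (continuous_pi (fun _ => (expLoop 1).continuous)) _⟩

noncomputable def coordc : C(HyperplaneComplement n r i, ℂ) :=
  ⟨fun z => z.1 (i k₀), (continuous_apply (i k₀)).comp continuous_subtype_val⟩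

noncomputable def Phi (F : C(HyperplaneComplement n r i, HyperplaneComplement n r i)) :
    C(II, ℂ) := (coordc i k₀).comp (F.comp (γc i))

lemma Phi_cont : Continuous (Phi i k₀) :=
  (ContinuousMap.continuous_postcomp _).comp (ContinuousMap.continuous_precomp _)

lemma Phi_ne (F : C(HyperplaneComplement n r i, HyperplaneComplement n r i)) (t : II) :
    Phi i k₀ F t ≠ 0 := (F ((γc i) t)).2 k₀

lemma γc_loop : (γc i) (pt 1) = (γc i) (pt 0) := by
  apply Subtype.ext
  funext j
  exact expLoop_loop 1

lemma Phi_loop (F : C(HyperplaneComplement n r i, HyperplaneComplement n r i)) :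
    Phi i k₀ F (pt 1) = Phi i k₀ F (pt 0) := by
  simp only [Phi, ContinuousMap.comp_apply, γc_loop]

lemma Phi_id : Phi i k₀ (ContinuousMap.id _) = expLoop 1 := by
  ext t
  rfl

noncomputable def sfun : (Fin n → ℂ) → (Fin n → ℂ) := fun z j => if j = i k₀ then (z (i k₀))⁻¹ else z j

lemma smem {z : Fin n → ℂ} (hz : z ∈ HyperplaneComplement n r i) :
    sfun i k₀ z ∈ HyperplaneComplement n r i := by
  intro k
  by_cases h : i k = i k₀
  · simp only [sfun, h, if_pos rfl]
    exact inv_ne_zero (hz k₀)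
  · simp only [sfun, if_neg h]
    exact hz k

noncomputable def σc : C(HyperplaneComplement n r i, HyperplaneComplement n r i) :=
  ⟨fun z => ⟨sfun i k₀ z.1, smem i k₀ z.2⟩, by
    apply Continuous.subtype_mk
    apply continuous_pi
    intro j
    by_cases h : j = i k₀
    · simp only [sfun, if_pos h]
      exact ((continuous_apply (i k₀)).comp continuous_subtype_val).inv₀ (fun z => z.2 k₀)
    · simp only [sfun, if_neg h]
      exact (continuous_apply j).comp continuous_subtype_val⟩

lemma σc_invol (z : HyperplaneComplement n r i) : σc i k₀ (σc i k₀ z) = z := by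
  apply Subtype.ext
  funext j
  simp only [σc, ContinuousMap.coe_mk, sfun]
  by_cases h : j = i k₀
  · simp [h, inv_inv]
  · simp [h]

lemma sfun_diff : DifferentiableOn ℂ (sfun i k₀ : (Fin n → ℂ) → (Fin n → ℂ))
    (HyperplaneComplement n r i) := by
  rw [differentiableOn_pi]
  intro j
  by_cases h : j = i k₀
  · have : (fun z : Fin n → ℂ => sfun i k₀ z j) = fun z => (z (i k₀))⁻¹ := by
      funext z; simp [sfun, h]
    rw [this]
    exact DifferentiableOn.inv
      ((ContinuousLinearMap.proj (i k₀) : (Fin n → ℂ) →L[ℂ] ℂ).differentiable.differentiableOn)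
      (fun z hz => hz k₀)
  · have : (fun z : Fin n → ℂ => sfun i k₀ z j) = fun z => z j := by
      funext z; simp [sfun, h]
    rw [this]
    exact ((ContinuousLinearMap.proj j : (Fin n → ℂ) →L[ℂ] ℂ).differentiable.differentiableOn)

lemma σc_mem : σc i k₀ ∈ AutOf (HyperplaneComplement n r i) := by
  constructor
  · exact ⟨sfun i k₀, sfun_diff i k₀, fun z => rfl⟩
  · exact ⟨σc i k₀, ⟨sfun i k₀, sfun_diff i k₀, fun z => rfl⟩,
      σc_invol i k₀, σc_invol i k₀⟩

lemma id_mem : ContinuousMap.id _ ∈ AutOf (HyperplaneComplement n r i) := by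
  constructor
  · exact ⟨id, differentiable_id.differentiableOn, fun z => rfl⟩
  · exact ⟨ContinuousMap.id _, ⟨id, differentiable_id.differentiableOn, fun z => rfl⟩,
      fun z => rfl, fun z => rfl⟩

lemma Phi_σc : Phi i k₀ (σc i k₀) = expLoop (-1) := by
  ext t
  show sfun i k₀ (γfun t) (i k₀) = expLoop (-1) t
  simp only [sfun, if_pos rfl, γfun, expLoop_apply]
  rw [← Complex.exp_neg]
  push_cast
  ring_nf

lemma w_Phi_id : w (Phi i k₀ (ContinuousMap.id _)) = 2 * Real.pi * Complex.I := by
  rw [Phi_id, expLoop_w 1 (by norm_num)]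
  push_cast
  ring

lemma w_Phi_σc : w (Phi i k₀ (σc i k₀)) = -(2 * Real.pi * Complex.I) := by
  rw [Phi_σc, expLoop_w (-1) (by norm_num)]
  push_cast
  ring

-- local constancy of F ↦ w (Phi F)
lemma w_Phi_locally_constant (F₀ : C(HyperplaneComplement n r i, HyperplaneComplement n r i)) :
    ∃ V : Set C(HyperplaneComplement n r i, HyperplaneComplement n r i),
      IsOpen V ∧ F₀ ∈ V ∧ ∀ F ∈ V, w (Phi i k₀ F) = w (Phi i k₀ F₀) := by
  obtain ⟨ε, hε, hkey⟩ := exists_eps (Phi i k₀ F₀) (Phi_ne i k₀ F₀) (Phi_loop i k₀ F₀)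
  refine ⟨(Phi i k₀) ⁻¹' (Metric.ball (Phi i k₀ F₀) ε), (Metric.isOpen_ball).preimage (Phi_cont i k₀),
    by simp [Metric.mem_ball, hε], ?_⟩
  intro F hF
  apply hkey _ (Phi_loop i k₀ F)
  intro t
  rw [← Complex.norm_eq_abs, ← Complex.dist_eq]
  calc dist (Phi i k₀ F t) (Phi i k₀ F₀ t) ≤ dist (Phi i k₀ F) (Phi i k₀ F₀) :=
    ContinuousMap.dist_apply_le_dist t
  _ ≤ ε := (Metric.mem_ball.mp hF).le

lemma clopen_T : IsClopen {F : C(HyperplaneComplement n r i, HyperplaneComplement n r i) |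
    w (Phi i k₀ F) = 2 * Real.pi * Complex.I} := by
  constructor
  · rw [← isOpen_compl_iff]
    rw [isOpen_iff_mem_nhds]
    intro F₀ hF₀
    obtain ⟨V, hV, hFV, hVc⟩ := w_Phi_locally_constant i k₀ F₀
    apply Filter.mem_of_superset (hV.mem_nhds hFV)
    intro F hF
    simp only [Set.mem_compl_iff, Set.mem_setOf_eq] at hF₀ ⊢
    rw [hVc F hF]
    exact hF₀
  · rw [isOpen_iff_mem_nhds]
    intro F₀ hF₀
    obtain ⟨V, hV, hFV, hVc⟩ := w_Phi_locally_constant i k₀ F₀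
    apply Filter.mem_of_superset (hV.mem_nhds hFV)
    intro F hF
    simp only [Set.mem_setOf_eq] at hF₀ ⊢
    rw [hVc F hF]
    exact hF₀

lemma not_preconnected_autOf (k₀ : Fin r) :
    ¬ PreconnectedSpace ↥(AutOf (HyperplaneComplement n r i)) := by
  intro hpc
  set T : Set C(HyperplaneComplement n r i, HyperplaneComplement n r i) :=
    {F | w (Phi i k₀ F) = 2 * Real.pi * Complex.I} with hT
  have hclopen : IsClopen (Subtype.val ⁻¹' T : Set ↥(AutOf (HyperplaneComplement n r i))) :=
    (clopen_T i k₀).preimage continuous_subtype_val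
  rcases isClopen_iff.mp hclopen with h | h
  · have : (⟨ContinuousMap.id _, id_mem i⟩ : ↥(AutOf (HyperplaneComplement n r i)))
        ∈ (Subtype.val ⁻¹' T : Set ↥(AutOf (HyperplaneComplement n r i))) := by
      simp only [Set.mem_preimage, hT, Set.mem_setOf_eq]
      exact w_Phi_id i k₀
    rw [h] at this
    exact this
  · have : (⟨σc i k₀, σc_mem i k₀⟩ : ↥(AutOf (HyperplaneComplement n r i)))
        ∈ (Subtype.val ⁻¹' T : Set ↥(AutOf (HyperplaneComplement n r i))) := by
      rw [h]; trivial
    simp only [Set.mem_preimage, hT, Set.mem_setOf_eq, w_Phi_σc] at this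
    have hpi := Real.pi_pos
    have h0 : ((4*Real.pi : ℝ) : ℂ) * Complex.I = 0 := by
      push_cast
      linear_combination -this
    have h1 : ((4*Real.pi : ℝ) : ℂ) = 0 :=
      (mul_eq_zero.mp h0).resolve_right Complex.I_ne_zero
    have h2 : (4*Real.pi : ℝ) = 0 := by exact_mod_cast h1
    linarith

end PartTwo

section JointCont

variable {E : Type*} [NormedAddCommGroup E] [NormedSpace ℂ E]

lemma joint_cont {f : E → E} (hf : Differentiable ℂ f) (hf0 : f 0 = 0) :
    Continuous fun p : ℂ × E =>
      if p.1 = 0 then fderiv ℂ f 0 p.2 else (p.1)⁻¹ • f (p.1 • p.2) := by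
  set A := fderiv ℂ f 0 with hA_def
  rw [continuous_iff_continuousAt]
  rintro ⟨t₀, z₀⟩
  by_cases ht₀ : t₀ = 0
  · subst ht₀
    have hA : HasFDerivAt f A 0 := (hf 0).hasFDerivAt
    have hlo : (fun w => f w - A w) =o[nhds 0] (fun w : E => w) := by
      simpa [hf0] using hA.isLittleO
    rw [Metric.continuousAt_iff]
    intro ε hε
    set R : ℝ := ‖z₀‖ + 1 with hR_def
    have hR : 0 < R := by positivity
    have hAnorm : (0:ℝ) < ‖A‖ + 1 := by positivity
    have hc : (0:ℝ) < ε/(4*R) := by positivity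
    obtain ⟨δ, hδpos, hδ⟩ := Metric.eventually_nhds_iff.mp
      ((Asymptotics.isLittleO_iff.mp hlo) hc)
    set ζ : ℝ := min 1 (ε/(4*(‖A‖+1))) with hζ_def
    have hζ : 0 < ζ := by
      apply lt_min one_pos
      positivity
    refine ⟨min (δ/R) ζ, lt_min (by positivity) hζ, ?_⟩
    rintro ⟨t, z⟩ hp
    rw [Prod.dist_eq, max_lt_iff] at hp
    obtain ⟨hpt, hpz⟩ := hp
    have ht : ‖t‖ < δ/R := by
      rw [dist_zero_right] at hpt
      exact lt_of_lt_of_le hpt (min_le_left _ _)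
    have hz : ‖z - z₀‖ < ζ := by
      rw [dist_eq_norm] at hpz
      exact lt_of_lt_of_le hpz (min_le_right _ _)
    have hzR : ‖z‖ < R := by
      have h1 : ‖z‖ ≤ ‖z - z₀‖ + ‖z₀‖ := by
        calc ‖z‖ = ‖(z - z₀) + z₀‖ := by rw [sub_add_cancel]
        _ ≤ ‖z - z₀‖ + ‖z₀‖ := norm_add_le _ _
      have h2 : ‖z - z₀‖ < 1 := lt_of_lt_of_le hz (min_le_left _ _)
      rw [hR_def]; linarith
    have hval0 : (if (0:ℂ) = 0 then A z₀ else (0:ℂ)⁻¹ • f ((0:ℂ) • z₀)) = A z₀ := if_pos rfl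
    rw [dist_eq_norm, hval0]
    have hb1 : ‖(if t = 0 then A z else t⁻¹ • f (t • z)) - A z‖ ≤ ε/4 := by
      by_cases ht0 : t = 0
      · rw [if_pos ht0, sub_self, norm_zero]; positivity
      · rw [if_neg ht0]
        have hid : t⁻¹ • f (t • z) - A z = t⁻¹ • (f (t • z) - A (t • z)) := by
          rw [smul_sub]
          congr 1
          rw [A.map_smul, smul_smul, inv_mul_cancel₀ ht0, one_smul]
        rw [hid, norm_smul, norm_inv]
        have hw : dist (t • z) 0 < δ := by
          rw [dist_zero_right, norm_smul]
          calc ‖t‖ * ‖z‖ ≤ ‖t‖ * R := by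
                apply mul_le_mul_of_nonneg_left hzR.le (norm_nonneg t)
            _ < (δ/R) * R := by
                apply mul_lt_mul_of_pos_right ht hR
            _ = δ := by field_simp
        have hbound := hδ hw
        calc ‖t‖⁻¹ * ‖f (t • z) - A (t • z)‖ ≤ ‖t‖⁻¹ * (ε/(4*R) * ‖t • z‖) := by
              apply mul_le_mul_of_nonneg_left hbound (by positivity)
          _ = ε/(4*R) * (‖t‖⁻¹ * ‖t • z‖) := by ring
          _ = ε/(4*R) * ‖z‖ := by
              rw [norm_smul, show ‖t‖⁻¹ * (‖t‖ * ‖z‖) = (‖t‖⁻¹ * ‖t‖) * ‖z‖ by ring,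
                inv_mul_cancel₀ (by simpa using ht0), one_mul]
          _ ≤ ε/(4*R) * R := by
              apply mul_le_mul_of_nonneg_left hzR.le (by positivity)
          _ = ε/4 := by field_simp
    have hb2 : ‖A z - A z₀‖ < ε/4 := by
      calc ‖A z - A z₀‖ = ‖A (z - z₀)‖ := by rw [A.map_sub]
        _ ≤ ‖A‖ * ‖z - z₀‖ := A.le_opNorm _
        _ ≤ ‖A‖ * ζ := by
            apply mul_le_mul_of_nonneg_left hz.le (norm_nonneg _)
        _ ≤ ‖A‖ * (ε/(4*(‖A‖+1))) := by
            apply mul_le_mul_of_nonneg_left (min_le_right _ _) (norm_nonneg _)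
        _ < (‖A‖+1) * (ε/(4*(‖A‖+1))) := by
            apply mul_lt_mul_of_pos_right (by linarith) (by positivity)
        _ = ε/4 := by field_simp
    calc ‖(if t = 0 then A z else t⁻¹ • f (t • z)) - A z₀‖
        = ‖((if t = 0 then A z else t⁻¹ • f (t • z)) - A z) + (A z - A z₀)‖ := by
          rw [sub_add_sub_cancel]
      _ ≤ ‖(if t = 0 then A z else t⁻¹ • f (t • z)) - A z‖ + ‖A z - A z₀‖ := norm_add_le _ _
      _ < ε/4 + ε/4 := by
          have := hb1; have := hb2; linarith
      _ < ε := by linarith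
  · have hcont : ContinuousAt (fun p : ℂ × E => (p.1)⁻¹ • f (p.1 • p.2)) (t₀, z₀) := by
      apply ContinuousAt.smul
      · exact continuousAt_fst.inv₀ ht₀
      · exact (hf.continuous.continuousAt).comp (continuousAt_fst.smul continuousAt_snd)
    apply hcont.congr
    have hopen : IsOpen {p : ℂ × E | p.1 ≠ 0} :=
      (isOpen_compl_singleton).preimage continuous_fst
    apply Filter.eventuallyEq_of_mem (hopen.mem_nhds ht₀)
    intro p hp
    simp only [Set.mem_setOf_eq] at hp
    simp [if_neg hp]

end JointCont

section PathConn

variable (n : ℕ)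

local notation "E" => (Fin n → ℂ)

lemma idCn_mem : ContinuousMap.id E ∈ AutCn n :=
  ⟨differentiable_id, ContinuousMap.id E, differentiable_id, fun _ => rfl, fun _ => rfl⟩

/-- path from `c 0` to `c 1` along a continuous family indexed by `ℂ`. -/
noncomputable def cpath (c : C(ℂ, C(E, E))) (x y : C(E, E)) (hx : c 0 = x) (hy : c 1 = y) :
    Path x y where
  toFun := fun t => c ((t : ℝ) : ℂ)
  continuous_toFun := c.continuous.comp (Complex.continuous_ofReal.comp continuous_subtype_val)
  source' := by rw [← hx]; norm_num
  target' := by rw [← hy]; norm_num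

lemma cpath_mem (c : C(ℂ, C(E, E))) (x y : C(E, E)) (hx : c 0 = x) (hy : c 1 = y)
    (h : ∀ s : ℂ, c s ∈ AutCn n) (t : unitInterval) :
    (cpath n c x y hx hy) t ∈ AutCn n := h _

/-- continuous map associated to a matrix -/
noncomputable def matCM (Q : Matrix (Fin n) (Fin n) ℂ) : C(E, E) :=
  ⟨fun z => Q.mulVec z, by
    have : (fun z : E => Q.mulVec z) = ⇑(LinearMap.toContinuousLinearMap (Matrix.toLin' Q)) := by
      rw [LinearMap.coe_toContinuousLinearMap']
      funext z
      rw [Matrix.toLin'_apply]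
    rw [this]
    exact (LinearMap.toContinuousLinearMap (Matrix.toLin' Q)).continuous⟩

lemma matCM_diff (Q : Matrix (Fin n) (Fin n) ℂ) : Differentiable ℂ (matCM n Q) := by
  have : ⇑(matCM n Q) = ⇑(LinearMap.toContinuousLinearMap (Matrix.toLin' Q)) := by
    rw [LinearMap.coe_toContinuousLinearMap']
    funext z
    rw [Matrix.toLin'_apply]
    rfl
  rw [this]
  exact (LinearMap.toContinuousLinearMap (Matrix.toLin' Q)).differentiable

lemma matCM_mem (Q : Matrix (Fin n) (Fin n) ℂ) (hQ : IsUnit Q.det) :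
    matCM n Q ∈ AutCn n := by
  refine ⟨matCM_diff n Q, matCM n Q⁻¹, matCM_diff n _, ?_, ?_⟩
  · intro z
    show Q⁻¹.mulVec (Q.mulVec z) = z
    rw [Matrix.mulVec_mulVec, Matrix.nonsing_inv_mul Q hQ, Matrix.one_mulVec]
  · intro z
    show Q.mulVec (Q⁻¹.mulVec z) = z
    rw [Matrix.mulVec_mulVec, Matrix.mul_nonsing_inv Q hQ, Matrix.one_mulVec]

theorem autCn_isPathConnected : IsPathConnected (AutCn n) := by
  refine ⟨ContinuousMap.id E, idCn_mem n, ?_⟩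
  intro F hF
  obtain ⟨hFd, Ginv, hGd, hGF, hFG⟩ := hF
  -- basic normalized maps
  set F₁ : C(E, E) := ⟨fun z => F z - F 0, F.continuous.sub continuous_const⟩ with hF₁_def
  set G₁ : C(E, E) := ⟨fun z => Ginv (z + F 0), Ginv.continuous.comp
    (continuous_id.add continuous_const)⟩ with hG₁_def
  have hF₁d : Differentiable ℂ ⇑F₁ := hFd.sub_const _
  have hG₁d : Differentiable ℂ ⇑G₁ := hGd.comp (differentiable_id.add_const _)
  have hF₁0 : F₁ 0 = 0 := sub_self _
  have hG₁F₁ : ∀ z, G₁ (F₁ z) = z := by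
    intro z
    show Ginv (F z - F 0 + F 0) = z
    rw [sub_add_cancel]
    exact hGF z
  have hF₁G₁ : ∀ z, F₁ (G₁ z) = z := by
    intro z
    show F (Ginv (z + F 0)) - F 0 = z
    rw [hFG]
    exact add_sub_cancel_right z _
  have hG₁0 : G₁ 0 = 0 := by
    show Ginv (0 + F 0) = 0
    rw [zero_add]
    exact hGF 0
  -- Segment 1 : F to F₁
  have seg1 : JoinedIn (AutCn n) F F₁ := by
    set J₁ : C(ℂ × E, E) := ⟨fun p => F p.2 - p.1 • F 0,
      (F.continuous.comp continuous_snd).sub (continuous_fst.smul continuous_const)⟩ with hJ₁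
    have h0 : (ContinuousMap.curry J₁) 0 = F := by
      refine ContinuousMap.ext fun z => ?_
      show F z - (0:ℂ) • F 0 = F z
      rw [zero_smul, sub_zero]
    have h1 : (ContinuousMap.curry J₁) 1 = F₁ := by
      refine ContinuousMap.ext fun z => ?_
      show F z - (1:ℂ) • F 0 = F z - F 0
      rw [one_smul]
    have hmem : ∀ s : ℂ, (ContinuousMap.curry J₁) s ∈ AutCn n := by
      intro s
      refine ⟨?_, ⟨fun z => Ginv (z + s • F 0), Ginv.continuous.comp
        (continuous_id.add continuous_const)⟩, ?_, ?_, ?_⟩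
      · show Differentiable ℂ (fun z => F z - s • F 0)
        exact hFd.sub_const _
      · show Differentiable ℂ (fun z => Ginv (z + s • F 0))
        exact hGd.comp (differentiable_id.add_const _)
      · intro z
        show Ginv ((F z - s • F 0) + s • F 0) = z
        rw [sub_add_cancel]
        exact hGF z
      · intro z
        show F (Ginv (z + s • F 0)) - s • F 0 = z
        rw [hFG]
        exact add_sub_cancel_right z _
    exact ⟨cpath n (ContinuousMap.curry J₁) F F₁ h0 h1,
      cpath_mem n (ContinuousMap.curry J₁) F F₁ h0 h1 hmem⟩
  -- derivative at 0
  set A : E →L[ℂ] E := fderiv ℂ (⇑F₁) 0 with hA_def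
  set B : E →L[ℂ] E := fderiv ℂ (⇑G₁) 0 with hB_def
  have hA : HasFDerivAt (⇑F₁) A 0 := (hF₁d 0).hasFDerivAt
  have hB0 : HasFDerivAt (⇑G₁) B (F₁ 0) := by
    rw [hF₁0]
    exact (hG₁d 0).hasFDerivAt
  have hA0 : HasFDerivAt (⇑F₁) A (G₁ 0) := by
    rw [hG₁0]
    exact hA
  have hBA : ∀ z, B (A z) = z := by
    have h1 : HasFDerivAt (⇑G₁ ∘ ⇑F₁) (B.comp A) 0 := hB0.comp 0 hA
    have h2 : (⇑G₁ ∘ ⇑F₁) = id := funext hG₁F₁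
    rw [h2] at h1
    have h3 := (hasFDerivAt_id (0:E)).unique h1
    intro z
    have := congrArg (fun (L : E →L[ℂ] E) => L z) h3
    simpa using this.symm
  have hAB : ∀ z, A (B z) = z := by
    have h1 : HasFDerivAt (⇑F₁ ∘ ⇑G₁) (A.comp B) 0 := hA0.comp 0 ((hG₁d 0).hasFDerivAt)
    have h2 : (⇑F₁ ∘ ⇑G₁) = id := funext hF₁G₁
    rw [h2] at h1
    have h3 := (hasFDerivAt_id (0:E)).unique h1
    intro z
    have := congrArg (fun (L : E →L[ℂ] E) => L z) h3
    simpa using this.symm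
  set Afn : C(E, E) := ⟨fun z => A z, A.continuous⟩ with hAfn_def
  have hAfn_mem : Afn ∈ AutCn n := by
    refine ⟨A.differentiable, ⟨fun z => B z, B.continuous⟩, B.differentiable, ?_, ?_⟩
    · intro z; exact hBA z
    · intro z; exact hAB z
  -- Segment 2 : F₁ to Afn
  have seg2 : JoinedIn (AutCn n) F₁ Afn := by
    set J₂ : C(ℂ × E, E) := ⟨fun p => if p.1 = 0 then A p.2 else (p.1)⁻¹ • F₁ (p.1 • p.2),
      joint_cont hF₁d hF₁0⟩ with hJ₂
    have h0 : (ContinuousMap.curry J₂) 0 = Afn := by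
      refine ContinuousMap.ext fun z => ?_
      show (if (0:ℂ) = 0 then A z else _) = A z
      rw [if_pos rfl]
    have h1 : (ContinuousMap.curry J₂) 1 = F₁ := by
      refine ContinuousMap.ext fun z => ?_
      show (if (1:ℂ) = 0 then A z else (1:ℂ)⁻¹ • F₁ ((1:ℂ) • z)) = F₁ z
      rw [if_neg one_ne_zero, inv_one, one_smul, one_smul]
    have hmem : ∀ s : ℂ, (ContinuousMap.curry J₂) s ∈ AutCn n := by
      intro s
      by_cases hs : s = 0
      · subst hs
        rw [h0]
        exact hAfn_mem
      · have hco : ⇑((ContinuousMap.curry J₂) s) = fun z => s⁻¹ • F₁ (s • z) := by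
          funext z
          show (if s = 0 then A z else s⁻¹ • F₁ (s • z)) = s⁻¹ • F₁ (s • z)
          rw [if_neg hs]
        refine ⟨?_, ⟨fun z => s⁻¹ • G₁ (s • z), (by fun_prop)⟩, ?_, ?_, ?_⟩
        · rw [hco]
          exact (hF₁d.comp (differentiable_id.const_smul s)).const_smul s⁻¹
        · show Differentiable ℂ (fun z => s⁻¹ • G₁ (s • z))
          exact (hG₁d.comp (differentiable_id.const_smul s)).const_smul s⁻¹
        · intro z
          show s⁻¹ • G₁ (s • ((ContinuousMap.curry J₂) s z)) = z
          rw [ContinuousMap.curry_apply]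
          show s⁻¹ • G₁ (s • (if s = 0 then A z else s⁻¹ • F₁ (s • z))) = z
          rw [if_neg hs, smul_inv_smul₀ hs, hG₁F₁, inv_smul_smul₀ hs]
        · intro z
          rw [ContinuousMap.curry_apply]
          show (if s = 0 then A (s⁻¹ • G₁ (s • z)) else s⁻¹ • F₁ (s • (s⁻¹ • G₁ (s • z)))) = z
          rw [if_neg hs, smul_inv_smul₀ hs, hF₁G₁, inv_smul_smul₀ hs]
    have seg2' : JoinedIn (AutCn n) Afn F₁ :=
      ⟨cpath n (ContinuousMap.curry J₂) Afn F₁ h0 h1,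
        cpath_mem n (ContinuousMap.curry J₂) Afn F₁ h0 h1 hmem⟩
    exact seg2'.symm
  -- Segment 3 : Afn to id
  have seg3 : JoinedIn (AutCn n) Afn (ContinuousMap.id E) := by
    set Mat : Matrix (Fin n) (Fin n) ℂ := LinearMap.toMatrix' (A : E →ₗ[ℂ] E) with hMat
    set MatB : Matrix (Fin n) (Fin n) ℂ := LinearMap.toMatrix' (B : E →ₗ[ℂ] E) with hMatB
    have hMatMul : Mat * MatB = 1 := by
      rw [hMat, hMatB, ← LinearMap.toMatrix'_comp, ← LinearMap.toMatrix'_id (R := ℂ) (n := Fin n)]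
      congr 1
      apply LinearMap.ext
      intro z
      simpa using hAB z
    have hdet : Mat.det ≠ 0 := by
      intro h
      have := congrArg Matrix.det hMatMul
      rw [Matrix.det_mul, h, zero_mul, Matrix.det_one] at this
      exact zero_ne_one this
    -- the determinant polynomial
    set P : Matrix (Fin n) (Fin n) (Polynomial ℂ) :=
      Mat.map Polynomial.C + (Polynomial.X : Polynomial ℂ) • ((1 - Mat).map Polynomial.C) with hP
    set p : Polynomial ℂ := P.det with hp
    have heval : ∀ s : ℂ, p.eval s = (Mat + s • (1 - Mat)).det := by
      intro s
      have h1 := RingHom.map_det (Polynomial.evalRingHom s) P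
      have h2 : (Polynomial.evalRingHom s).mapMatrix P = Mat + s • (1 - Mat) := by
        ext i j
        simp [hP, Matrix.add_apply, Matrix.smul_apply, Matrix.map_apply, smul_eq_mul]
      rw [hp, ← h2]
      exact h1
    have hp0 : p.eval 0 = Mat.det := by
      rw [heval]
      norm_num
    have hp1 : p.eval 1 = 1 := by
      rw [heval]
      have : Mat + (1:ℂ) • (1 - Mat) = 1 := by
        rw [one_smul, add_sub_cancel]
      rw [this, Matrix.det_one]
    have hpne : p ≠ 0 := by
      intro h
      rw [h, Polynomial.eval_zero] at hp0
      exact hdet hp0.symm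
    have hroots : {x : ℂ | p.IsRoot x}.Finite := Polynomial.finite_setOf_isRoot hpne
    have hpc : IsPathConnected {x : ℂ | p.IsRoot x}ᶜ :=
      hroots.countable.isPathConnected_compl_of_one_lt_rank
        (by rw [Complex.rank_real_complex]; norm_num)
    have h0mem : (0:ℂ) ∈ {x : ℂ | p.IsRoot x}ᶜ := by
      simp only [Set.mem_compl_iff, Set.mem_setOf_eq, Polynomial.IsRoot]
      rw [hp0]
      exact hdet
    have h1mem : (1:ℂ) ∈ {x : ℂ | p.IsRoot x}ᶜ := by
      simp only [Set.mem_compl_iff, Set.mem_setOf_eq, Polynomial.IsRoot]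
      rw [hp1]
      exact one_ne_zero
    obtain ⟨ρ, hρ⟩ := hpc.joinedIn 0 h0mem 1 h1mem
    -- continuous family
    set Jmv : C(ℂ × E, E) := ⟨fun q => fun a => ∑ j, (Mat a j + q.1 * (1 - Mat) a j) * q.2 j, by
      apply continuous_pi
      intro a
      apply continuous_finset_sum
      intro j _
      exact ((continuous_const.add (continuous_fst.mul continuous_const)).mul
        ((continuous_apply j).comp continuous_snd))⟩ with hJmv
    have hJmv_eq : ∀ s : ℂ, (ContinuousMap.curry Jmv) s = matCM n (Mat + s • (1 - Mat)) := by
      intro s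
      refine ContinuousMap.ext fun z => ?_
      show (fun a => ∑ j, (Mat a j + s * (1 - Mat) a j) * z j) = (Mat + s • (1 - Mat)).mulVec z
      funext a
      rw [Matrix.mulVec]
      simp [dotProduct, Matrix.add_apply, Matrix.smul_apply, smul_eq_mul]
    have hmv0 : matCM n (Mat + (0:ℂ) • (1 - Mat)) = Afn := by
      refine ContinuousMap.ext fun z => ?_
      show (Mat + (0:ℂ) • (1 - Mat)).mulVec z = A z
      rw [zero_smul, add_zero]
      rw [← Matrix.toLin'_apply, hMat, Matrix.toLin'_toMatrix']
      rfl
    have hmv1 : matCM n (Mat + (1:ℂ) • (1 - Mat)) = ContinuousMap.id E := by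
      refine ContinuousMap.ext fun z => ?_
      show (Mat + (1:ℂ) • (1 - Mat)).mulVec z = z
      have : Mat + (1:ℂ) • (1 - Mat) = 1 := by
        rw [one_smul, add_sub_cancel]
      rw [this, Matrix.one_mulVec]
    refine ⟨{ toFun := fun t => (ContinuousMap.curry Jmv) (ρ t),
              continuous_toFun := (ContinuousMap.curry Jmv).continuous.comp ρ.continuous,
              source' := by
                show (ContinuousMap.curry Jmv) (ρ 0) = Afn
                rw [ρ.source, hJmv_eq, hmv0],
              target' := by
                show (ContinuousMap.curry Jmv) (ρ 1) = ContinuousMap.id E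
                rw [ρ.target, hJmv_eq, hmv1] }, ?_⟩
    intro t
    show (ContinuousMap.curry Jmv) (ρ t) ∈ AutCn n
    rw [hJmv_eq]
    apply matCM_mem
    rw [isUnit_iff_ne_zero]
    have := hρ t
    simp only [Set.mem_compl_iff, Set.mem_setOf_eq, Polynomial.IsRoot] at this
    rw [heval] at this
    exact this
  exact ((seg1.trans seg2).trans seg3).symm

end PathConn

end Aux15

/-- For `n ≥ 2` and `D = ℂⁿ` minus a nonempty union of coordinate
hyperplanes, there is no isomorphism of topological groups between `Aut(ℂⁿ)` and
`Aut(D)`: no homeomorphism between them (compact-open topologies) that respects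
composition. -/
theorem aut_Cn_not_isomorphic_to_aut_hyperplane_complement
    (n r : ℕ) (hn : 2 ≤ n) (hr : 1 ≤ r)
    (i : Fin r → Fin n) (hi : StrictMono i) :
    ¬ ∃ e : AutCn n ≃ₜ AutOf (HyperplaneComplement n r i),
        ∀ f g h : AutCn n, f.val.comp g.val = h.val →
          (e f).val.comp (e g).val = (e h).val := by
  rintro ⟨e, -⟩
  have hconn : ConnectedSpace ↥(AutCn n) :=
    Subtype.connectedSpace (Aux15.autCn_isPathConnected n).isConnected
  have hpre : PreconnectedSpace ↥(AutOf (HyperplaneComplement n r i)) := by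
    constructor
    have h := (isPreconnected_univ (α := ↥(AutCn n))).image ⇑e e.continuous.continuousOn
    rwa [Set.image_univ, e.surjective.range_eq] at h
  exact Aux15.not_preconnected_autOf i ⟨0, hr⟩ hpre
end

section
/- Let n ≥ 1 and let Φ : (ℂ*)ⁿ → (ℂ*)ⁿ be an injective continuous group homomorphism, where ℂ* = ℂ \ {0} is the multiplicative group of nonzero complex numbers and (ℂ*)ⁿ carries the product topology and componentwise multiplication. Then Φ is surjective, and hence a topological group automorphism of (ℂ*)ⁿ (its inverse is also continuous). -/
/-!
The log-modulus map `logNorm : (ℂˣ)^ι → ℝ^ι` is a split surjection whose kernel is the compact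
torus `T = (S¹)^ι`. Torsion points lie in `T` (their powers are bounded) and are dense in it. An
injective `Φ` permutes the finitely many `m`-torsion points for each `m`, so the closed set `Φ(T)`
contains all torsion points, hence `T ⊆ Φ(T)`. Therefore `t ↦ logNorm (Φ (exp t))` is an injective,
hence surjective, linear endomorphism of `ℝ^ι`, and `Φ` is onto. Its inverse is continuous by the
open mapping theorem for σ-compact locally compact groups.
-/

open Set Function

theorem norm_le_one_of_bddAbove_norm_pow {𝕜 : Type*} [NormedDivisionRing 𝕜] {x : 𝕜}
    (h : BddAbove (range fun k : ℕ => ‖x ^ k‖)) : ‖x‖ ≤ 1 := by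
  obtain ⟨B, hB⟩ := h
  by_contra! hx
  obtain ⟨k, hk⟩ := pow_unbounded_of_one_lt B hx
  exact (hB ⟨k, rfl⟩).not_gt (by simpa only [norm_pow])

theorem MonoidHom.setOf_isOfFinOrder_subset_image {G : Type*} [Group G] (Φ : G →* G)
    (hΦ : Injective Φ) (hfin : ∀ m ≠ 0, {x : G | x ^ m = 1}.Finite) :
    {x | IsOfFinOrder x} ⊆ Φ '' {x | IsOfFinOrder x} := by
  intro x hx
  obtain ⟨m, hm, hxm⟩ := isOfFinOrder_iff_pow_eq_one.1 hx
  have hmaps : MapsTo Φ {y | y ^ m = 1} {y | y ^ m = 1} := fun y (hy : y ^ m = 1) => by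
    simp [← map_pow, hy]
  obtain ⟨y, hy, rfl⟩ :=
    ((hfin m hm.ne').injOn_iff_bijOn_of_mapsTo hmaps |>.1 hΦ.injOn).surjOn hxm
  exact ⟨y, isOfFinOrder_iff_pow_eq_one.2 ⟨m, hm, hy⟩, rfl⟩

theorem MonoidHom.exists_continuous_inverse_of_bijective {G H : Type*} [Group G]
    [TopologicalSpace G] [IsTopologicalGroup G] [SigmaCompactSpace G] [Group H]
    [TopologicalSpace H] [BaireSpace H] [T2Space H] [ContinuousMul H]
    (Φ : G →* H) (hcont : Continuous Φ) (hbij : Bijective Φ) :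
    ∃ Ψ : H →* G, Continuous Ψ ∧ LeftInverse Ψ Φ ∧ RightInverse Ψ Φ := by
  let e := MulEquiv.ofBijective Φ hbij
  have hopen : IsOpenMap Φ := Φ.isOpenMap_of_sigmaCompact hbij.2 hcont
  exact ⟨e.symm.toMonoidHom,
    ((Equiv.ofBijective Φ hbij).toHomeomorphOfContinuousOpen hcont hopen).symm.continuous,
    e.symm_apply_apply, e.apply_symm_apply⟩

instance : SecondCountableTopology ℂˣ := Units.isEmbedding_val₀.secondCountableTopology

namespace ComplexTorus

def unitCircle : Subgroup ℂˣ where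
  carrier := {u | ‖(u : ℂ)‖ = 1}
  mul_mem' := by simp_all
  one_mem' := by simp
  inv_mem' := by simp_all

@[simp] theorem mem_unitCircle {u : ℂˣ} : u ∈ unitCircle ↔ ‖(u : ℂ)‖ = 1 := Iff.rfl

theorem isCompact_unitCircle : IsCompact (unitCircle : Set ℂˣ) := by
  rw [Units.isEmbedding_val₀.isCompact_iff]
  convert isCompact_sphere (0 : ℂ) 1
  ext z
  refine ⟨fun ⟨u, hu, hz⟩ => by simpa [← hz] using hu, fun hz => ?_⟩
  have hz : ‖z‖ = 1 := by simpa using hz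
  exact ⟨Units.mk0 z (by rintro rfl; simp at hz), by simpa using hz, rfl⟩

theorem unitCircle_subset_closure_isOfFinOrder :
    (unitCircle : Set ℂˣ) ⊆ closure {u | IsOfFinOrder u} := by
  let e : ℝ → ℂˣ := fun t => Units.mk0 (Complex.exp (t * (2 * Real.pi * Complex.I)))
    (Complex.exp_ne_zero _)
  have he : Continuous e := Units.isEmbedding_val₀.continuous_iff.2 <| by
    simp only [comp_def, e, Units.val_mk0]; fun_prop
  have hrange : (unitCircle : Set ℂˣ) ⊆ range e := by
    intro u hu
    refine ⟨Complex.arg u / (2 * Real.pi), Units.ext ?_⟩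
    have h := Complex.norm_mul_exp_arg_mul_I (u : ℂ)
    rw [show ‖(u : ℂ)‖ = 1 from hu] at h
    simp only [e, Units.val_mk0]
    convert h using 2
    push_cast
    field_simp
  have hrat : e '' range ((↑) : ℚ → ℝ) ⊆ {u | IsOfFinOrder u} := by
    rintro _ ⟨_, ⟨q, rfl⟩, rfl⟩
    refine isOfFinOrder_iff_pow_eq_one.2 ⟨q.den, q.pos, Units.ext ?_⟩
    simp only [e, Units.val_pow_eq_pow_val, Units.val_mk0, Units.val_one, ← Complex.exp_nat_mul]
    convert Complex.exp_int_mul_two_pi_mul_I q.num using 2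
    have : (q.den : ℂ) * (q : ℂ) = q.num := by exact_mod_cast Rat.den_mul_eq_num q
    push_cast
    linear_combination (2 * Real.pi * Complex.I) * this
  calc (unitCircle : Set ℂˣ) ⊆ e '' closure (range ((↑) : ℚ → ℝ)) := by
        rwa [Rat.denseRange_cast.closure_range, image_univ]
    _ ⊆ closure (e '' range ((↑) : ℚ → ℝ)) := image_closure_subset_closure_image he
    _ ⊆ closure {u | IsOfFinOrder u} := closure_mono hrat

variable {ι : Type*}

variable (ι) in
def torus : Subgroup (ι → ℂˣ) := Subgroup.pi univ fun _ => unitCircle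

theorem mem_torus {x : ι → ℂˣ} : x ∈ torus ι ↔ ∀ i, ‖(x i : ℂ)‖ = 1 := by
  simp [torus, Subgroup.mem_pi]

theorem isCompact_torus : IsCompact (torus ι : Set (ι → ℂˣ)) := by
  rw [torus, Subgroup.coe_pi]
  exact isCompact_univ_pi fun _ => isCompact_unitCircle

theorem torus_subset_closure_isOfFinOrder [Finite ι] :
    (torus ι : Set (ι → ℂˣ)) ⊆ closure {x | IsOfFinOrder x} := by
  rw [torus, Subgroup.coe_pi]
  calc univ.pi (fun _ => (unitCircle : Set ℂˣ))
      ⊆ univ.pi fun _ => closure {u : ℂˣ | IsOfFinOrder u} :=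
        pi_mono fun _ _ => unitCircle_subset_closure_isOfFinOrder
    _ = closure (univ.pi fun _ => {u : ℂˣ | IsOfFinOrder u}) := (closure_pi_set _ _).symm
    _ ⊆ closure {x | IsOfFinOrder x} :=
        closure_mono fun x hx => IsOfFinOrder.pi fun i => hx i (mem_univ i)

theorem le_torus_of_isCompact {H : Subgroup (ι → ℂˣ)} (hH : IsCompact (H : Set (ι → ℂˣ))) :
    H ≤ torus ι := by
  have hle : ∀ x ∈ H, ∀ i, ‖(x i : ℂ)‖ ≤ 1 := by
    intro x hx i
    have hcont : Continuous fun y : ι → ℂˣ => ‖(y i : ℂ)‖ := by fun_prop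
    refine norm_le_one_of_bddAbove_norm_pow ((hH.bddAbove_image hcont.continuousOn).mono ?_)
    rintro _ ⟨k, rfl⟩
    exact ⟨x ^ k, H.pow_mem hx k, by simp⟩
  intro x hx
  refine mem_torus.2 fun i => (hle x hx i).antisymm ?_
  have := hle x⁻¹ (H.inv_mem hx) i
  rw [Pi.inv_apply, Units.val_inv_eq_inv_val, norm_inv] at this
  exact (inv_le_one₀ (norm_pos_iff.2 (x i).ne_zero)).1 this

theorem finite_setOf_pow_eq_one [Finite ι] {m : ℕ} (hm : m ≠ 0) :
    {x : ι → ℂˣ | x ^ m = 1}.Finite := by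
  have : NeZero m := ⟨hm⟩
  have hroots : (rootsOfUnity m ℂ : Set ℂˣ).Finite :=
    Set.finite_coe_iff.1 (inferInstanceAs (Finite (rootsOfUnity m ℂ)))
  refine (Set.Finite.pi' fun _ => hroots).subset fun x hx i => ?_
  simpa using congrFun hx i

theorem torus_le_map_torus [Finite ι] (Φ : (ι → ℂˣ) →* (ι → ℂˣ)) (hcont : Continuous Φ)
    (hinj : Injective Φ) : torus ι ≤ (torus ι).map Φ := by
  have htors : {x : ι → ℂˣ | IsOfFinOrder x} ⊆ torus ι := fun x hx =>
    le_torus_of_isCompact hx.finite_zpowers.isCompact (Subgroup.mem_zpowers x)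
  calc (torus ι : Set (ι → ℂˣ)) ⊆ closure {x | IsOfFinOrder x} := torus_subset_closure_isOfFinOrder
    _ ⊆ closure (Φ '' torus ι) := closure_mono <|
        (Φ.setOf_isOfFinOrder_subset_image hinj fun _ => finite_setOf_pow_eq_one).trans
          (image_mono htors)
    _ = Φ '' torus ι := (isCompact_torus.image hcont).isClosed.closure_eq

noncomputable def logNorm (x : ι → ℂˣ) : ι → ℝ := fun i => Real.log ‖(x i : ℂ)‖

theorem logNorm_mul (x y : ι → ℂˣ) : logNorm (x * y) = logNorm x + logNorm y := by
  funext i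
  simp only [logNorm, Pi.mul_apply, Units.val_mul, norm_mul, Pi.add_apply]
  exact Real.log_mul (norm_ne_zero_iff.2 (x i).ne_zero) (norm_ne_zero_iff.2 (y i).ne_zero)

theorem logNorm_inv (x : ι → ℂˣ) : logNorm x⁻¹ = -logNorm x := by
  funext i
  simp [logNorm, Real.log_inv]

theorem continuous_logNorm : Continuous (logNorm : (ι → ℂˣ) → ι → ℝ) :=
  continuous_pi fun i => (by fun_prop : Continuous fun x : ι → ℂˣ => ‖(x i : ℂ)‖).log
    fun x => norm_ne_zero_iff.2 (x i).ne_zero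

theorem logNorm_eq_zero_iff {x : ι → ℂˣ} : logNorm x = 0 ↔ x ∈ torus ι := by
  rw [mem_torus, funext_iff]
  refine forall_congr' fun i => ?_
  have hpos : 0 < ‖(x i : ℂ)‖ := norm_pos_iff.2 (x i).ne_zero
  rw [logNorm, Pi.zero_apply, Real.log_eq_zero]
  constructor
  · rintro (h | h | h) <;> linarith
  · exact fun h => Or.inr (Or.inl h)

noncomputable def expReal (t : ι → ℝ) : ι → ℂˣ := fun i =>
  Units.mk0 (Real.exp (t i) : ℂ) (Complex.ofReal_ne_zero.2 (Real.exp_ne_zero _))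

theorem expReal_add (t s : ι → ℝ) : expReal (t + s) = expReal t * expReal s := by
  funext i
  ext
  simp [expReal, Real.exp_add]

theorem continuous_expReal : Continuous (expReal : (ι → ℝ) → ι → ℂˣ) :=
  continuous_pi fun i => Units.isEmbedding_val₀.continuous_iff.2 <| by
    simp only [comp_def, expReal, Units.val_mk0]; fun_prop

theorem logNorm_expReal (t : ι → ℝ) : logNorm (expReal t) = t := by
  funext i
  simp [logNorm, expReal]

noncomputable def logNormMap (Φ : (ι → ℂˣ) →* (ι → ℂˣ)) (hcont : Continuous Φ) :
    (ι → ℝ) →L[ℝ] (ι → ℝ) :=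
  (AddMonoidHom.mk' (fun t => logNorm (Φ (expReal t))) fun t s => by
    rw [expReal_add, map_mul, logNorm_mul]).toRealLinearMap
    (continuous_logNorm.comp (hcont.comp continuous_expReal))

theorem logNormMap_apply (Φ : (ι → ℂˣ) →* (ι → ℂˣ)) (hcont : Continuous Φ) (t : ι → ℝ) :
    logNormMap Φ hcont t = logNorm (Φ (expReal t)) := rfl

theorem surjective_of_injective_of_continuous [Finite ι] (Φ : (ι → ℂˣ) →* (ι → ℂˣ))
    (hcont : Continuous Φ) (hinj : Injective Φ) : Surjective Φ := by
  have hT' : torus ι ≤ (torus ι).map Φ := torus_le_map_torus Φ hcont hinj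
  set L := logNormMap Φ hcont
  have hL : Injective L := by
    refine (injective_iff_map_eq_zero L).2 fun t ht => ?_
    obtain ⟨u, hu, hΦu⟩ := hT' (logNorm_eq_zero_iff.1 ht)
    rw [← logNorm_expReal t, logNorm_eq_zero_iff, ← hinj hΦu]
    exact hu
  intro y
  obtain ⟨t, ht⟩ := (LinearMap.injective_iff_surjective (f := L.toLinearMap)).1 hL (logNorm y)
  have hy : y * (Φ (expReal t))⁻¹ ∈ torus ι := by
    rw [← logNorm_eq_zero_iff, logNorm_mul, logNorm_inv, ← logNormMap_apply, ← ht]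
    exact add_neg_cancel _
  obtain ⟨u, -, hΦu⟩ := hT' hy
  exact ⟨u * expReal t, by rw [map_mul, hΦu, inv_mul_cancel_right]⟩

end ComplexTorus

theorem injective_continuous_endomorphism_of_torus_is_automorphism_general
    (n : ℕ)
    (Φ : (Fin n → ℂˣ) →* (Fin n → ℂˣ))
    (hcont : Continuous Φ) (hinj : Function.Injective Φ) :
    Function.Surjective Φ ∧
    ∃ Ψ : (Fin n → ℂˣ) →* (Fin n → ℂˣ),
      Continuous Ψ ∧ Function.LeftInverse Ψ Φ ∧ Function.RightInverse Ψ Φ := by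
  have hsurj := ComplexTorus.surjective_of_injective_of_continuous Φ hcont hinj
  exact ⟨hsurj, Φ.exists_continuous_inverse_of_bijective hcont ⟨hinj, hsurj⟩⟩

/-- For `n ≥ 1`, every injective continuous group homomorphism
`Φ : (ℂ*)ⁿ → (ℂ*)ⁿ` is surjective, and its inverse is a continuous group
homomorphism, so `Φ` is a topological group automorphism of `(ℂ*)ⁿ`. -/
theorem injective_continuous_endomorphism_of_torus_is_automorphism
    (n : ℕ) (hn : 1 ≤ n)
    (Φ : (Fin n → ℂˣ) →* (Fin n → ℂˣ))
    (hcont : Continuous Φ) (hinj : Function.Injective Φ) :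
    Function.Surjective Φ ∧
    ∃ Ψ : (Fin n → ℂˣ) →* (Fin n → ℂˣ),
      Continuous Ψ ∧ Function.LeftInverse Ψ Φ ∧ Function.RightInverse Ψ Φ :=
  injective_continuous_endomorphism_of_torus_is_automorphism_general n Φ hcont hinj
end
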